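/- arXiv:2012.05041 — 5 statements merged into one kernel-verified Lean document; each statement's English description precedes it below -/
import Mathlib

section
/- Let m ≥ 4 and let s = (s_{ij})_{(i,j)∈S_m} be any vector of positive real weights. Consider the m−3 rational critical equations of the scattering potential L(x) = Σ_{(i,j)∈S_m} s_{ij}·log q_{ij}(x), namely Σ_{(i,j)∈S_m} s_{ij}·(∂q_{ij}/∂x_k)(x)/q_{ij}(x) = 0 for k = 1,…,m−3, on the set of x ∈ ℂ^{m−3} with q_{ij}(x) ≠ 0 for all (i,j) ∈ S_m. Then this system has precisely (m−3)! solutions; every solution lies in ℝ^{m−3}; and for each permutation π of {1,…,m−3} there is exactly one solution satisfying 0 < x_{π(1)} < x_{π(2)} < ⋯ < x_{π(m−3)} < 1. -/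
/-!
Every solution lies in the convex hull `[0, 1]` of the two fixed points `0` and `1`, by a maximum
principle for the equations; so it is real and, as no `q_p` vanishes, it lies in exactly one open
chamber `0 < x_{π 1} < ⋯ < x_{π (m-3)} < 1`. On each chamber the likelihood `∏ |q_p| ^ s_p` has an
interior maximum, which is a solution, and there is no other: the `q_p` are affine and of constant
sign on a chamber, which makes the potential `∑ s_p log |q_p|` strictly concave there.
-/

open scoped BigOperators

noncomputable section

/-- The columns of the normalized `2 × m` matrix parametrizing `M_{0,m}`:
`c_1 = (0,-1)`, `c_2 = (1,0)`, `c_j = (1, x_{j-2})` for `3 ≤ j ≤ m-1`, `c_m = (1,1)`. -/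
def chyCol (m : ℕ) (x : Fin (m - 3) → ℂ) (j : ℕ) : ℂ × ℂ :=
  if j = 1 then (0, -1)
  else if j = 2 then (1, 0)
  else if j = m then (1, 1)
  else (1, if h : j - 3 < m - 3 then x ⟨j - 3, h⟩ else 0)

/-- The `2 × 2` minor `q_{ij}(x) = det(c_i, c_j)`. -/
def chyQ (m : ℕ) (i j : ℕ) (x : Fin (m - 3) → ℂ) : ℂ :=
  (chyCol m x i).1 * (chyCol m x j).2 - (chyCol m x i).2 * (chyCol m x j).1

/-- The state set `S_m = {(i,j) : 2 ≤ i < j ≤ m, (i,j) ≠ (2,m)}`. -/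
def chyStates (m : ℕ) : Finset (ℕ × ℕ) :=
  ((Finset.Icc 2 m) ×ˢ (Finset.Icc 2 m)).filter fun p => p.1 < p.2 ∧ p ≠ (2, m)

/-- Solutions of the rational critical equations
`∑_{(i,j) ∈ S_m} s_{ij} (∂q_{ij}/∂x_k)(x) / q_{ij}(x) = 0`, `k = 1, …, m-3`,
on the locus where all `q_{ij}(x) ≠ 0`. -/
def chySol (m : ℕ) (s : ℕ × ℕ → ℝ) : Set (Fin (m - 3) → ℂ) :=
  {x | (∀ p ∈ chyStates m, chyQ m p.1 p.2 x ≠ 0) ∧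
    ∀ k : Fin (m - 3),
      ∑ p ∈ chyStates m,
        (s p : ℂ) * fderiv ℂ (chyQ m p.1 p.2) x (Pi.single k 1) / chyQ m p.1 p.2 x = 0}

namespace CHY

/-- `c_j = (1, point m x j)` for `j ≥ 2`; defined over any field so that real points can be used. -/
def point {F : Type*} [Field F] (m : ℕ) (x : Fin (m - 3) → F) (c : ℕ) : F :=
  if c = 2 then 0 else if c = m then 1 else if h : c - 3 < m - 3 then x ⟨c - 3, h⟩ else 0

def minor {F : Type*} [Field F] (m : ℕ) (x : Fin (m - 3) → F) (p : ℕ × ℕ) : F :=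
  point m x p.2 - point m x p.1

/-- `∂q_p/∂x_k`, where the (0-based) coordinate `x_k` sits in the column `k + 3`. -/
def minorDeriv (p : ℕ × ℕ) (k : ℕ) : ℤ :=
  (if p.2 = k + 3 then 1 else 0) - (if p.1 = k + 3 then 1 else 0)

/-- `∂/∂x_k` of the potential `∑ w_p log q_p`. -/
def score {F : Type*} [Field F] (m : ℕ) (w : ℕ × ℕ → F) (x : Fin (m - 3) → F) (k : ℕ) : F :=
  ∑ p ∈ chyStates m, w p * minorDeriv p k / minor m x p

def Critical {F : Type*} [Field F] (m : ℕ) (w : ℕ × ℕ → F) (x : Fin (m - 3) → F) : Prop :=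
  (∀ p ∈ chyStates m, minor m x p ≠ 0) ∧ ∀ k : Fin (m - 3), score m w x k = 0

section Field

variable {F K : Type*} [Field F] [Field K] {m : ℕ}

lemma mem_chyStates {p : ℕ × ℕ} :
    p ∈ chyStates m ↔ 2 ≤ p.1 ∧ p.1 < p.2 ∧ p.2 ≤ m ∧ p ≠ (2, m) := by
  simp only [chyStates, Finset.mem_filter, Finset.mem_product, Finset.mem_Icc]
  exact ⟨fun ⟨⟨⟨h1, _⟩, _, h4⟩, h5, h6⟩ => ⟨h1, h5, h4, h6⟩,
    fun ⟨h1, h2, h3, h4⟩ => ⟨⟨⟨h1, by omega⟩, by omega, h3⟩, h2, h4⟩⟩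

lemma two_coord_mem_chyStates (k : Fin (m - 3)) : (2, (k : ℕ) + 3) ∈ chyStates m := by
  have := k.isLt
  simp only [mem_chyStates, ne_eq, Prod.ext_iff]
  omega

lemma coord_m_mem_chyStates (k : Fin (m - 3)) : ((k : ℕ) + 3, m) ∈ chyStates m := by
  have := k.isLt
  simp only [mem_chyStates, ne_eq, Prod.ext_iff]
  omega

lemma coord_coord_mem_chyStates {a b : Fin (m - 3)} (hab : a < b) :
    ((a : ℕ) + 3, (b : ℕ) + 3) ∈ chyStates m := by
  have := b.isLt
  simp only [mem_chyStates, ne_eq, Prod.ext_iff, Fin.lt_def] at hab ⊢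
  omega

lemma chyStates_cases {p : ℕ × ℕ} (hp : p ∈ chyStates m) :
    (∃ b : Fin (m - 3), p = (2, (b : ℕ) + 3)) ∨ (∃ a : Fin (m - 3), p = ((a : ℕ) + 3, m)) ∨
      ∃ a b : Fin (m - 3), a < b ∧ p = ((a : ℕ) + 3, (b : ℕ) + 3) := by
  obtain ⟨p1, p2⟩ := p
  simp only [mem_chyStates, ne_eq, Prod.mk.injEq] at hp
  by_cases h1 : p1 = 2
  · exact .inl ⟨⟨p2 - 3, by omega⟩, by ext <;> simp <;> omega⟩
  by_cases h2 : p2 = m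
  · exact .inr <| .inl ⟨⟨p1 - 3, by omega⟩, by ext <;> simp <;> omega⟩
  refine .inr <| .inr ⟨⟨p1 - 3, by omega⟩, ⟨p2 - 3, by omega⟩, ?_, by ext <;> simp <;> omega⟩
  simp only [Fin.mk_lt_mk]
  omega

@[simp] lemma point_two (x : Fin (m - 3) → F) : point m x 2 = 0 := by simp [point]

lemma point_m (hm : m ≠ 2) (x : Fin (m - 3) → F) : point m x m = 1 := by simp [point, hm]

@[simp] lemma point_coord (x : Fin (m - 3) → F) (k : Fin (m - 3)) :
    point m x ((k : ℕ) + 3) = x k := by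
  have := k.isLt
  rw [point, if_neg (by omega), if_neg (by omega), dif_pos (by omega)]
  simp

lemma point_eq_zero_or_one_or_coord (x : Fin (m - 3) → F) (c : ℕ) :
    point m x c = 0 ∨ point m x c = 1 ∨ ∃ l, point m x c = x l := by
  unfold point
  split_ifs <;> simp

lemma map_point (f : F →+* K) (x : Fin (m - 3) → F) (c : ℕ) :
    f (point m x c) = point m (f ∘ x) c := by
  unfold point
  split_ifs <;> simp

lemma point_sub_point (y z : Fin (m - 3) → F) {c : ℕ} (hc : 2 ≤ c) :
    point m z c - point m y c = ∑ k : Fin (m - 3), (z k - y k) * if c = k + 3 then 1 else 0 := by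
  by_cases hcoord : ∃ k : Fin (m - 3), c = k + 3
  · obtain ⟨k, rfl⟩ := hcoord
    rw [point_coord, point_coord,
      Fintype.sum_eq_single k fun l hl => by simp [Fin.val_inj, hl.symm]]
    simp
  · push Not at hcoord
    rw [Finset.sum_eq_zero fun k _ => by simp [hcoord k]]
    unfold point
    split_ifs with _ _ hlt
    · ring
    · ring
    · exact absurd (hcoord ⟨c - 3, hlt⟩) (by simp; omega)
    · ring

@[simp] lemma minor_two_coord (x : Fin (m - 3) → F) (k : Fin (m - 3)) :
    minor m x (2, (k : ℕ) + 3) = x k := by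
  simp [minor]

@[simp] lemma minor_coord_m (x : Fin (m - 3) → F) (k : Fin (m - 3)) :
    minor m x ((k : ℕ) + 3, m) = 1 - x k := by
  have := k.isLt
  simp [minor, point_m (show m ≠ 2 by omega)]

@[simp] lemma minor_coord_coord (x : Fin (m - 3) → F) (a b : Fin (m - 3)) :
    minor m x ((a : ℕ) + 3, (b : ℕ) + 3) = x b - x a := by
  simp [minor]

lemma forall_minor_ne_zero_iff {x : Fin (m - 3) → F} :
    (∀ p ∈ chyStates m, minor m x p ≠ 0) ↔ (∀ k, x k ≠ 0 ∧ x k ≠ 1) ∧ x.Injective := by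
  refine ⟨fun h => ⟨fun k => ?_, fun a b hab => ?_⟩, fun ⟨h01, hinj⟩ p hp => ?_⟩
  · have h1 := h _ (two_coord_mem_chyStates k)
    have h2 := h _ (coord_m_mem_chyStates k)
    simp only [minor_two_coord, minor_coord_m, sub_ne_zero] at h1 h2
    exact ⟨h1, h2.symm⟩
  · by_contra hne
    rcases lt_or_gt_of_ne hne with hlt | hlt
    · exact h _ (coord_coord_mem_chyStates hlt) (by simp [hab])
    · exact h _ (coord_coord_mem_chyStates hlt) (by simp [hab])
  · rcases chyStates_cases hp with ⟨b, rfl⟩ | ⟨a, rfl⟩ | ⟨a, b, hab, rfl⟩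
    · simpa using (h01 b).1
    · rw [minor_coord_m]; exact sub_ne_zero.2 (h01 a).2.symm
    · simpa [sub_eq_zero] using hinj.ne hab.ne'

lemma minor_sub_minor (y z : Fin (m - 3) → F) {p : ℕ × ℕ} (hp : p ∈ chyStates m) :
    minor m z p - minor m y p = ∑ k : Fin (m - 3), (z k - y k) * minorDeriv p k := by
  obtain ⟨h1, h12, -, -⟩ := mem_chyStates.mp hp
  have h := congrArg₂ (· - ·) (point_sub_point y z (c := p.2) (by omega)) (point_sub_point y z h1)
  simp only [← Finset.sum_sub_distrib, ← mul_sub] at h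
  rw [minor, minor, sub_sub_sub_comm, h]
  simp [minorDeriv]

lemma map_minor (f : F →+* K) (x : Fin (m - 3) → F) (p : ℕ × ℕ) :
    f (minor m x p) = minor m (f ∘ x) p := by
  simp [minor, map_point]

lemma map_score (f : F →+* K) (w : ℕ × ℕ → F) (x : Fin (m - 3) → F) (k : ℕ) :
    f (score m w x k) = score m (f ∘ w) (f ∘ x) k := by
  simp [score, map_minor]

lemma critical_map_iff (f : F →+* K) {w : ℕ × ℕ → F} {x : Fin (m - 3) → F} :
    Critical m (f ∘ w) (f ∘ x) ↔ Critical m w x := by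
  simp only [Critical, ← map_minor, ← map_score, map_ne_zero, map_eq_zero]

lemma sum_sub_mul_score_sub (w : ℕ × ℕ → F) (y z : Fin (m - 3) → F) :
    ∑ k : Fin (m - 3), (z k - y k) * (score m w y k - score m w z k) =
      ∑ p ∈ chyStates m,
        w p * (minor m z p - minor m y p) * ((minor m y p)⁻¹ - (minor m z p)⁻¹) := by
  simp only [score, ← Finset.sum_sub_distrib, Finset.mul_sum]
  rw [Finset.sum_comm]
  refine Finset.sum_congr rfl fun p hp => ?_
  rw [minor_sub_minor y z hp, Finset.mul_sum, Finset.sum_mul]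
  exact Finset.sum_congr rfl fun k _ => by ring

end Field

lemma hasFDerivAt_minor {𝕜 : Type*} [NontriviallyNormedField 𝕜] {m : ℕ} {p : ℕ × ℕ}
    (hp : p ∈ chyStates m) (x : Fin (m - 3) → 𝕜) :
    HasFDerivAt (fun z => minor m z p)
      (∑ k : Fin (m - 3), (minorDeriv p k : 𝕜) •
        (ContinuousLinearMap.proj k : (Fin (m - 3) → 𝕜) →L[𝕜] 𝕜)) x := by
  have h : (fun z => minor m z p) = fun z => minor m 0 p +
      (∑ k : Fin (m - 3), (minorDeriv p k : 𝕜) •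
        (ContinuousLinearMap.proj k : (Fin (m - 3) → 𝕜) →L[𝕜] 𝕜)) z := by
    ext z
    simp [← sub_eq_iff_eq_add', minor_sub_minor 0 z hp, mul_comm]
  rw [h]
  exact (ContinuousLinearMap.hasFDerivAt _).const_add _

section Complex

open ComplexConjugate

variable {m : ℕ} {s : ℕ × ℕ → ℝ} {x : Fin (m - 3) → ℂ}

lemma chyQ_eq_minor {p : ℕ × ℕ} (hp : p ∈ chyStates m) (x : Fin (m - 3) → ℂ) :
    chyQ m p.1 p.2 x = minor m x p := by
  obtain ⟨h1, h12, -, -⟩ := mem_chyStates.mp hp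
  have hcol : ∀ c, 2 ≤ c → chyCol m x c = (1, point m x c) := by
    intro c hc
    unfold chyCol point
    split_ifs <;> first | rfl | omega
  simp [chyQ, minor, hcol _ h1, hcol p.2 (by omega)]

lemma mem_chySol_iff : x ∈ chySol m s ↔ Critical m (fun p => (s p : ℂ)) x := by
  have hq : ∀ p ∈ chyStates m, chyQ m p.1 p.2 = fun z => minor m z p :=
    fun p hp => funext (chyQ_eq_minor hp)
  refine and_congr (forall₂_congr fun p hp => by rw [chyQ_eq_minor hp]) (forall_congr' fun k => ?_)
  refine Eq.congr_left (Finset.sum_congr rfl fun p hp => ?_)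
  rw [hq p hp, (hasFDerivAt_minor hp x).fderiv]
  simp [Pi.single_apply]

lemma minorDeriv_mul_sub_nonneg {w : ℕ → ℝ} {p : ℕ × ℕ} {k : ℕ} (h1 : w p.1 ≤ w (k + 3))
    (h2 : w p.2 ≤ w (k + 3)) : 0 ≤ (minorDeriv p k : ℝ) * (w p.2 - w p.1) := by
  unfold minorDeriv
  split_ifs with hp2 hp1 hp1
  · simp [hp1, hp2]
  · rw [hp2]; push_cast; linarith
  · rw [hp1]; push_cast; linarith
  · simp

lemma re_conj_mul_ofReal_div (v q : ℂ) (a : ℝ) :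
    (conj v * (a / q)).re = a * (v * q).re / Complex.normSq q := by
  simp [div_eq_mul_inv, Complex.mul_re, Complex.mul_im, Complex.inv_re, Complex.inv_im]
  ring

/-- At a coordinate extremal in the direction `v`, all terms of its equation, turned by `conj v`,
have real part of the same sign. -/
lemma re_mul_le_of_critical (hs : ∀ p ∈ chyStates m, 0 < s p)
    (hx : Critical m (fun p => (s p : ℂ)) x) (v : ℂ) (k : Fin (m - 3)) :
    (v * x k).re ≤ max 0 v.re := by
  by_contra! hk
  obtain ⟨k₀, -, hk₀⟩ := Finset.univ.exists_max_image (fun l => (v * x l).re) ⟨k, by simp⟩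
  have hk₀pos : 0 < (v * x k₀).re := (le_max_left _ _).trans_lt (hk.trans_le (hk₀ k (by simp)))
  have hmax : ∀ c, (v * point m x c).re ≤ (v * point m x ((k₀ : ℕ) + 3)).re := by
    intro c
    rw [point_coord]
    rcases point_eq_zero_or_one_or_coord x c with h | h | ⟨l, h⟩ <;> rw [h]
    · simpa using hk₀pos.le
    · simpa using ((le_max_right _ _).trans_lt (hk.trans_le (hk₀ k (by simp)))).le
    · exact hk₀ l (by simp)
  have hsum := congrArg (fun z => (conj v * z).re) (hx.2 k₀)
  simp only [score, Finset.mul_sum, Complex.re_sum, mul_zero, Complex.zero_re] at hsum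
  refine hsum.not_gt (Finset.sum_pos' (fun p hp => ?_) ⟨_, two_coord_mem_chyStates k₀, ?_⟩)
  all_goals
    rw [← Complex.ofReal_intCast, ← Complex.ofReal_mul, re_conj_mul_ofReal_div]
  · have hD := minorDeriv_mul_sub_nonneg (w := fun c => (v * point m x c).re) (p := p)
      (hmax p.1) (hmax p.2)
    refine div_nonneg ?_ (Complex.normSq_nonneg _)
    simp only [minor, mul_sub, Complex.sub_re] at hD ⊢
    linear_combination mul_nonneg (hs p hp).le hD
  · have hq := hx.1 _ (two_coord_mem_chyStates k₀)
    rw [minor_two_coord] at hq ⊢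
    have hD : minorDeriv (2, (k₀ : ℕ) + 3) k₀ = 1 := by simp [minorDeriv]
    rw [hD]
    exact div_pos (by simpa using mul_pos (hs _ (two_coord_mem_chyStates k₀)) hk₀pos)
      (Complex.normSq_pos.mpr hq)

lemma im_eq_zero_and_re_mem_Icc_of_critical (hs : ∀ p ∈ chyStates m, 0 < s p)
    (hx : Critical m (fun p => (s p : ℂ)) x) (k : Fin (m - 3)) :
    (x k).im = 0 ∧ (x k).re ∈ Set.Icc 0 1 := by
  have h := re_mul_le_of_critical hs hx
  have hI := h Complex.I k
  have hnI := h (-Complex.I) k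
  have h1 := h 1 k
  have hn1 := h (-1) k
  simp at hI hnI h1 hn1
  exact ⟨le_antisymm hnI hI, hn1, h1⟩

end Complex

section Chamber

variable {n : ℕ} {π : Equiv.Perm (Fin n)} {y : Fin n → ℝ}

def chamber (π : Equiv.Perm (Fin n)) : Set (Fin n → ℝ) :=
  {y | (∀ k, 0 < y (π k) ∧ y (π k) < 1) ∧ ∀ k l, k < l → y (π k) < y (π l)}

def closedChamber (π : Equiv.Perm (Fin n)) : Set (Fin n → ℝ) :=
  {y | (∀ k, 0 ≤ y (π k) ∧ y (π k) ≤ 1) ∧ ∀ k l, k ≤ l → y (π k) ≤ y (π l)}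

lemma chamber_subset_closedChamber : chamber π ⊆ closedChamber π :=
  fun _ ⟨h01, hlt⟩ => ⟨fun k => ⟨(h01 k).1.le, (h01 k).2.le⟩,
    fun k l hkl => hkl.eq_or_lt.elim (fun h => h ▸ le_rfl) fun h => (hlt k l h).le⟩

lemma isOpen_chamber : IsOpen (chamber π) := by
  simp only [chamber, Set.ofPred_and, Set.ofPred_forall]
  exact (isOpen_iInter_of_finite fun k =>
      (isOpen_lt continuous_const (continuous_apply _)).inter
        (isOpen_lt (continuous_apply _) continuous_const)).inter
    (isOpen_iInter_of_finite fun k => isOpen_iInter_of_finite fun l => isOpen_iInter_of_finite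
      fun _ => isOpen_lt (continuous_apply _) (continuous_apply _))

lemma isCompact_closedChamber : IsCompact (closedChamber π) := by
  have hclosed : IsClosed (closedChamber π) := by
    simp only [closedChamber, Set.ofPred_and, Set.ofPred_forall]
    exact (isClosed_iInter fun k =>
        (isClosed_le continuous_const (continuous_apply _)).inter
          (isClosed_le (continuous_apply _) continuous_const)).inter
      (isClosed_iInter fun k => isClosed_iInter fun l => isClosed_iInter
        fun _ => isClosed_le (continuous_apply _) (continuous_apply _))
  refine (isCompact_univ_pi fun _ => isCompact_Icc (a := (0 : ℝ)) (b := 1)).of_isClosed_subset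
    hclosed fun y hy => Set.mem_univ_pi.mpr fun k => ?_
  simpa using hy.1 (π.symm k)

lemma chamber_nonempty (π : Equiv.Perm (Fin n)) : (chamber π).Nonempty := by
  refine ⟨fun k => ((π.symm k : ℕ) + 1) / (n + 1), fun k => ?_, fun k l hkl => ?_⟩
  · simp only [Equiv.symm_apply_apply]
    have := k.isLt
    constructor
    · positivity
    · rw [div_lt_one (by positivity)]
      exact_mod_cast Nat.succ_lt_succ this
  · simp only [Equiv.symm_apply_apply]
    gcongr
    exact_mod_cast hkl

lemma mem_chamber_of_mem_closedChamber (hy : y ∈ closedChamber π)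
    (h01 : ∀ k, y k ≠ 0 ∧ y k ≠ 1) (hinj : y.Injective) : y ∈ chamber π :=
  ⟨fun k => ⟨(hy.1 k).1.lt_of_ne (h01 _).1.symm, (hy.1 k).2.lt_of_ne (h01 _).2⟩,
    fun k l hkl => (hy.2 k l hkl.le).lt_of_ne ((hinj.comp π.injective).ne hkl.ne)⟩

lemma sort_eq_of_mem_chamber (hy : y ∈ chamber π) : Tuple.sort y = π :=
  (Tuple.eq_sort_iff.mpr ⟨fun k l hkl => (hkl.eq_or_lt.elim (fun h => h ▸ le_rfl)
    fun h => (hy.2 k l h).le), fun _ _ hkl h => absurd h (hy.2 _ _ hkl).ne⟩).symm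

lemma mem_chamber_sort (h01 : ∀ k, y k ∈ Set.Ioo 0 1) (hinj : y.Injective) :
    y ∈ chamber (Tuple.sort y) :=
  ⟨fun _ => h01 _, fun _ _ hkl =>
    (Tuple.monotone_sort y).strictMono_of_injective (hinj.comp (Tuple.sort y).injective) hkl⟩

lemma lt_iff_of_mem_chamber (hy : y ∈ chamber π) {a b : Fin n} :
    y a < y b ↔ π.symm a < π.symm b := by
  have hmono : StrictMono (y ∘ π) := fun k l hkl => hy.2 k l hkl
  simpa using hmono.lt_iff_lt (a := π.symm a) (b := π.symm b)

end Chamber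

section Real

variable {m : ℕ} {s : ℕ × ℕ → ℝ} {π : Equiv.Perm (Fin (m - 3))} {y z : Fin (m - 3) → ℝ}

lemma critical_ofReal_iff :
    Critical m (fun p => (s p : ℂ)) (fun k => (y k : ℂ)) ↔ Critical m s y :=
  critical_map_iff Complex.ofRealHom

lemma exists_ofReal_eq_of_mem_chySol (hs : ∀ p ∈ chyStates m, 0 < s p) {x : Fin (m - 3) → ℂ}
    (hx : x ∈ chySol m s) : ∃ y, Critical m s y ∧ (fun k => (y k : ℂ)) = x := by
  have hx := mem_chySol_iff.1 hx
  have hxy : (fun k => ((x k).re : ℂ)) = x := funext fun k =>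
    Complex.ext rfl (by simp [(im_eq_zero_and_re_mem_Icc_of_critical hs hx k).1])
  exact ⟨_, critical_ofReal_iff.1 (hxy ▸ hx), hxy⟩

lemma mem_Ioo_of_critical (hs : ∀ p ∈ chyStates m, 0 < s p) (hy : Critical m s y)
    (k : Fin (m - 3)) : y k ∈ Set.Ioo 0 1 := by
  have h := (im_eq_zero_and_re_mem_Icc_of_critical hs (critical_ofReal_iff.2 hy) k).2
  have h01 := (forall_minor_ne_zero_iff.1 hy.1).1 k
  rw [Complex.ofReal_re] at h
  exact ⟨h.1.lt_of_ne h01.1.symm, h.2.lt_of_ne h01.2⟩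

lemma mem_chamber_sort_of_critical (hs : ∀ p ∈ chyStates m, 0 < s p) (hy : Critical m s y) :
    y ∈ chamber (Tuple.sort y) :=
  mem_chamber_sort (mem_Ioo_of_critical hs hy) (forall_minor_ne_zero_iff.1 hy.1).2

lemma minor_mul_pos_of_mem_chamber (hy : y ∈ chamber π) (hz : z ∈ chamber π) {p : ℕ × ℕ}
    (hp : p ∈ chyStates m) : 0 < minor m y p * minor m z p := by
  have hy01 k : 0 < y k ∧ y k < 1 := by simpa using hy.1 (π.symm k)
  have hz01 k : 0 < z k ∧ z k < 1 := by simpa using hz.1 (π.symm k)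
  rcases chyStates_cases hp with ⟨b, rfl⟩ | ⟨a, rfl⟩ | ⟨a, b, hab, rfl⟩
  · simpa using mul_pos (hy01 b).1 (hz01 b).1
  · simpa using mul_pos (sub_pos.2 (hy01 a).2) (sub_pos.2 (hz01 a).2)
  · simp only [minor_coord_coord]
    rcases lt_or_gt_of_ne (π.symm.injective.ne hab.ne) with h | h
    · exact mul_pos (sub_pos.2 ((lt_iff_of_mem_chamber hy).2 h))
        (sub_pos.2 ((lt_iff_of_mem_chamber hz).2 h))
    · exact mul_pos_of_neg_of_neg (sub_neg.2 ((lt_iff_of_mem_chamber hy).2 h))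
        (sub_neg.2 ((lt_iff_of_mem_chamber hz).2 h))

lemma minor_ne_zero_of_mem_chamber (hy : y ∈ chamber π) :
    ∀ p ∈ chyStates m, minor m y p ≠ 0 :=
  fun _ hp => mul_self_ne_zero.mp (minor_mul_pos_of_mem_chamber hy hy hp).ne'

/-- Pairing the difference of the equations at `y` and `z` with `z - y` gives
`∑ s_p (q_p(z) - q_p(y))² / (q_p(y) q_p(z)) = 0`. -/
lemma eq_of_critical_of_minor_mul_pos (hs : ∀ p ∈ chyStates m, 0 < s p)
    (hy : Critical m s y) (hz : Critical m s z)
    (hyz : ∀ p ∈ chyStates m, 0 < minor m y p * minor m z p) : y = z := by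
  have hterm : ∀ p ∈ chyStates m,
      s p * (minor m z p - minor m y p) * ((minor m y p)⁻¹ - (minor m z p)⁻¹) =
        s p * (minor m z p - minor m y p) ^ 2 / (minor m y p * minor m z p) := by
    intro p hp
    have := hy.1 p hp
    have := hz.1 p hp
    field_simp
  have hsum := sum_sub_mul_score_sub s y z
  simp only [hy.2, hz.2, sub_zero, mul_zero, Finset.sum_const_zero] at hsum
  rw [Finset.sum_congr rfl hterm, eq_comm, Finset.sum_eq_zero_iff_of_nonneg fun p hp =>
    div_nonneg (mul_nonneg (hs p hp).le (sq_nonneg _)) (hyz p hp).le] at hsum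
  funext k
  have hp := two_coord_mem_chyStates k
  have hk := (mul_eq_zero.1 ((div_eq_zero_iff.1 (hsum _ hp)).resolve_right
    (hyz _ hp).ne')).resolve_left (hs _ hp).ne'
  simpa [sub_eq_zero, eq_comm] using hk

lemma eq_of_critical_of_mem_chamber (hs : ∀ p ∈ chyStates m, 0 < s p) (hy : Critical m s y)
    (hz : Critical m s z) (hyπ : y ∈ chamber π) (hzπ : z ∈ chamber π) : y = z :=
  eq_of_critical_of_minor_mul_pos hs hy hz fun _ hp => minor_mul_pos_of_mem_chamber hyπ hzπ hp

def potential (m : ℕ) (s : ℕ × ℕ → ℝ) (y : Fin (m - 3) → ℝ) : ℝ :=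
  ∑ p ∈ chyStates m, s p * Real.log (minor m y p)

def likelihood (m : ℕ) (s : ℕ × ℕ → ℝ) (y : Fin (m - 3) → ℝ) : ℝ :=
  ∏ p ∈ chyStates m, |minor m y p| ^ s p

lemma continuous_likelihood (hs : ∀ p ∈ chyStates m, 0 ≤ s p) : Continuous (likelihood m s) :=
  continuous_finsetProd _ fun p hp => (Real.continuous_rpow_const (hs p hp)).comp
    (continuous_iff_continuousAt.2 fun y => (hasFDerivAt_minor hp y).continuousAt).abs

lemma likelihood_pos (hnz : ∀ p ∈ chyStates m, minor m y p ≠ 0) : 0 < likelihood m s y :=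
  Finset.prod_pos fun p hp => Real.rpow_pos_of_pos (abs_pos.2 (hnz p hp)) _

lemma likelihood_eq_zero (hs : ∀ p ∈ chyStates m, 0 < s p) {p : ℕ × ℕ} (hp : p ∈ chyStates m)
    (h : minor m y p = 0) : likelihood m s y = 0 :=
  Finset.prod_eq_zero hp (by simp [h, (hs p hp).ne'])

lemma log_likelihood (hnz : ∀ p ∈ chyStates m, minor m y p ≠ 0) :
    Real.log (likelihood m s y) = potential m s y := by
  rw [likelihood, Real.log_prod fun p hp => (Real.rpow_pos_of_pos (abs_pos.2 (hnz p hp)) _).ne']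
  exact Finset.sum_congr rfl fun p hp => by
    rw [Real.log_rpow (abs_pos.2 (hnz p hp)), Real.log_abs]

lemma hasDerivAt_potential_line (hnz : ∀ p ∈ chyStates m, minor m y p ≠ 0) (k : Fin (m - 3)) :
    HasDerivAt (fun t : ℝ => potential m s (y + t • Pi.single k 1)) (score m s y k) 0 := by
  have hline : ∀ t : ℝ, ∀ p ∈ chyStates m,
      minor m (y + t • Pi.single k 1) p = minor m y p + t * minorDeriv p k := by
    intro t p hp
    rw [← sub_eq_iff_eq_add', minor_sub_minor y _ hp]
    simp [Pi.single_apply]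
  have hterm : ∀ p ∈ chyStates m, HasDerivAt
      (fun t : ℝ => s p * Real.log (minor m y p + t * minorDeriv p k))
      (s p * minorDeriv p k / minor m y p) 0 := by
    intro p hp
    simpa [mul_div_assoc] using ((((hasDerivAt_id' (0 : ℝ)).mul_const
      (minorDeriv p k : ℝ)).const_add (minor m y p)).log (by simpa using hnz p hp)).const_mul (s p)
  have hfun : (fun t : ℝ => potential m s (y + t • Pi.single k 1)) =
      fun t => ∑ p ∈ chyStates m, s p * Real.log (minor m y p + t * minorDeriv p k) :=
    funext fun t => Finset.sum_congr rfl fun p hp => by rw [hline t p hp]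
  rw [hfun]
  exact HasDerivAt.fun_sum hterm

lemma score_eq_zero_of_isLocalMax (hnz : ∀ p ∈ chyStates m, minor m y p ≠ 0)
    (h : IsLocalMax (potential m s) y) (k : Fin (m - 3)) : score m s y k = 0 := by
  have h₀ : IsLocalMax (potential m s) (y + (0 : ℝ) • Pi.single k 1) := by
    rwa [zero_smul, add_zero]
  have hline : IsLocalMax (potential m s ∘ fun t : ℝ => y + t • Pi.single k 1) 0 :=
    IsLocalMax.comp_continuous (g := fun t : ℝ => y + t • Pi.single k 1) (b := 0) h₀
      (by fun_prop)
  exact hline.hasDerivAt_eq_zero (hasDerivAt_potential_line hnz k)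

lemma exists_critical_mem_chamber (hs : ∀ p ∈ chyStates m, 0 < s p)
    (π : Equiv.Perm (Fin (m - 3))) : ∃ y ∈ chamber π, Critical m s y := by
  obtain ⟨y₁, hy₁⟩ := chamber_nonempty π
  obtain ⟨y₀, hy₀, hmax⟩ := isCompact_closedChamber.exists_isMaxOn
    ⟨y₁, chamber_subset_closedChamber hy₁⟩
    (continuous_likelihood fun p hp => (hs p hp).le).continuousOn
  have hnz : ∀ p ∈ chyStates m, minor m y₀ p ≠ 0 := by
    intro p hp h0
    have : likelihood m s y₁ ≤ likelihood m s y₀ := hmax (chamber_subset_closedChamber hy₁)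
    rw [likelihood_eq_zero hs hp h0] at this
    exact this.not_gt (likelihood_pos (minor_ne_zero_of_mem_chamber hy₁))
  obtain ⟨h01, hinj⟩ := forall_minor_ne_zero_iff.1 hnz
  have hy₀' := mem_chamber_of_mem_closedChamber hy₀ h01 hinj
  refine ⟨y₀, hy₀', hnz, score_eq_zero_of_isLocalMax hnz ?_⟩
  filter_upwards [isOpen_chamber.mem_nhds hy₀'] with y hy
  have hnz' := minor_ne_zero_of_mem_chamber hy
  rw [← log_likelihood hnz, ← log_likelihood hnz']
  exact Real.log_le_log (likelihood_pos hnz') (hmax (chamber_subset_closedChamber hy))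

end Real

end CHY

theorem stmt0_general (m : ℕ) (s : ℕ × ℕ → ℝ) (hs : ∀ p ∈ chyStates m, 0 < s p) :
    (chySol m s).Finite ∧
    (chySol m s).ncard = Nat.factorial (m - 3) ∧
    (∀ x ∈ chySol m s, ∀ k, (x k).im = 0) ∧
    ∀ π : Equiv.Perm (Fin (m - 3)), ∃! y : Fin (m - 3) → ℝ,
      (fun k => (y k : ℂ)) ∈ chySol m s ∧
      (∀ k, 0 < y (π k) ∧ y (π k) < 1) ∧
      ∀ k l : Fin (m - 3), k < l → y (π k) < y (π l) := by
  choose sol hsol_mem hsol_crit using CHY.exists_critical_mem_chamber hs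
  have hmem (y : Fin (m - 3) → ℝ) : (fun k => (y k : ℂ)) ∈ chySol m s ↔ CHY.Critical m s y :=
    CHY.mem_chySol_iff.trans CHY.critical_ofReal_iff
  have hrange : Set.range (fun π k => (sol π k : ℂ)) = chySol m s := by
    refine Set.Subset.antisymm (Set.range_subset_iff.2 fun π => (hmem _).2 (hsol_crit π))
      fun x hx => ?_
    obtain ⟨y, hy, rfl⟩ := CHY.exists_ofReal_eq_of_mem_chySol hs hx
    exact ⟨Tuple.sort y, congrArg (fun y k => (y k : ℂ)) <| CHY.eq_of_critical_of_mem_chamber hs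
      (hsol_crit _) hy (hsol_mem _) (CHY.mem_chamber_sort_of_critical hs hy)⟩
  have hinj : Function.Injective (fun π k => (sol π k : ℂ)) := fun π π' h => by
    have : sol π = sol π' := funext fun k => Complex.ofReal_injective (congrFun h k)
    rw [← CHY.sort_eq_of_mem_chamber (hsol_mem π), this, CHY.sort_eq_of_mem_chamber (hsol_mem π')]
  refine ⟨hrange ▸ Set.finite_range _, ?_, fun x hx k => ?_, fun π => ⟨sol π,
    ⟨(hmem _).2 (hsol_crit π), hsol_mem π⟩, fun y ⟨hy, hyπ⟩ =>
      CHY.eq_of_critical_of_mem_chamber hs ((hmem y).1 hy) (hsol_crit π) hyπ (hsol_mem π)⟩⟩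
  · rw [← hrange, Set.ncard_range_of_injective hinj, Nat.card_eq_fintype_card,
      Fintype.card_perm, Fintype.card_fin]
  · obtain ⟨y, -, rfl⟩ := CHY.exists_ofReal_eq_of_mem_chySol hs hx
    exact Complex.ofReal_im _

/-- The CHY scattering equations have precisely `(m-3)!` solutions, all of them real,
with exactly one solution satisfying `0 < x_{π(1)} < ⋯ < x_{π(m-3)} < 1`
for each permutation `π`. -/
theorem stmt0 (m : ℕ) (hm : 4 ≤ m) (s : ℕ × ℕ → ℝ) (hs : ∀ p ∈ chyStates m, 0 < s p) :
    (chySol m s).Finite ∧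
    (chySol m s).ncard = Nat.factorial (m - 3) ∧
    (∀ x ∈ chySol m s, ∀ k, (x k).im = 0) ∧
    ∀ π : Equiv.Perm (Fin (m - 3)), ∃! y : Fin (m - 3) → ℝ,
      (fun k => (y k : ℂ)) ∈ chySol m s ∧
      (∀ k, 0 < y (π k) ∧ y (π k) < 1) ∧
      ∀ k l : Fin (m - 3), k < l → y (π k) < y (π l) :=
  stmt0_general m s hs

end
end

section
/- Let p_0, p_1, …, p_n : ℝ^d → ℝ be affine-linear functions defining n+1 pairwise distinct hyperplanes H_i = {x : p_i(x) = 0}, and assume the arrangement is essential, i.e. the linear parts of p_0,…,p_n span the dual space (ℝ^d)^*. Let s_0,…,s_n be positive real numbers. Then every point x ∈ ℂ^d with p_i(x) ≠ 0 for all i (extending each p_i ℂ-linearly to ℂ^d) that satisfies the likelihood equations Σ_{i=0}^n s_i·(∂p_i/∂x_k)/p_i(x) = 0 for k = 1,…,d lies in ℝ^d, and each bounded connected component of ℝ^d ∖ (H_0 ∪ ⋯ ∪ H_n) contains exactly one such point. -/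
/-!
Write `p_i(z) = ⟨a_i, z⟩ + b_i`. Contracting the likelihood equations at `z` with any direction
`v` gives `∑ s_i ⟨a_i, v⟩ / p_i(z) = 0`. For a complex critical point and `v = Im z`, the
imaginary part of this identity is `-∑ s_i ⟨a_i, v⟩² / |p_i(z)|²`, so every `⟨a_i, v⟩` vanishes
and `v = 0` because the `a_i` span. For two real critical points `y₁, y₂` in one region, on which
every `p_i` has constant sign, take `v = y₂ - y₁`: subtracting the two identities gives
`∑ s_i ⟨a_i, v⟩² / (p_i(y₁) p_i(y₂)) = 0`, hence `y₁ = y₂`. For existence, the likelihood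
`∏ |p_i|^{s_i}` is continuous on all of `ℝ^d`, positive on a bounded region and zero on its
boundary, so it has a maximum inside the region, which is a critical point of
`∑ s_i log p_i`.
-/

open Set Finset

section Topology

variable {E : Type*}

lemma mem_connectedComponentIn_of_mem_closure [TopologicalSpace E] [LocallyConnectedSpace E]
    {U : Set E} (hU : IsOpen U) {x w : E} (hw : w ∈ closure (connectedComponentIn U x))
    (hwU : w ∈ U) : w ∈ connectedComponentIn U x := by
  obtain ⟨z, hzw, hzx⟩ :=
    mem_closure_iff.1 hw _ hU.connectedComponentIn (mem_connectedComponentIn hwU)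
  rw [connectedComponentIn_eq hzx, ← connectedComponentIn_eq hzw]
  exact mem_connectedComponentIn hwU

lemma mul_pos_of_mem_connectedComponentIn [TopologicalSpace E] {f : E → ℝ} (hf : Continuous f)
    {U : Set E} (hfU : ∀ u ∈ U, f u ≠ 0) {x y₁ y₂ : E} (hy₁ : y₁ ∈ connectedComponentIn U x)
    (hy₂ : y₂ ∈ connectedComponentIn U x) : 0 < f y₁ * f y₂ := by
  have hC : IsPreconnected (connectedComponentIn U x) := isPreconnected_connectedComponentIn
  have hfC : ∀ z ∈ connectedComponentIn U x, f z ≠ 0 :=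
    fun z hz => hfU z (connectedComponentIn_subset U x hz)
  by_contra! hneg
  rcases mul_nonpos_iff.1 hneg with ⟨h₁, h₂⟩ | ⟨h₁, h₂⟩
  · obtain ⟨z, hz, hz0⟩ := hC.intermediate_value hy₂ hy₁ hf.continuousOn ⟨h₂, h₁⟩
    exact hfC z hz hz0
  · obtain ⟨z, hz, hz0⟩ := hC.intermediate_value hy₁ hy₂ hf.continuousOn ⟨h₁, h₂⟩
    exact hfC z hz hz0

lemma exists_isLocalMax_mem_connectedComponentIn [PseudoMetricSpace E]
    [ProperSpace E] [LocallyConnectedSpace E] {U : Set E} (hU : IsOpen U) {x : E} (hx : x ∈ U)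
    (hbdd : Bornology.IsBounded (connectedComponentIn U x)) {f : E → ℝ} (hf : Continuous f)
    (hfU : ∀ w ∉ U, f w < f x) : ∃ y ∈ connectedComponentIn U x, IsLocalMax f y := by
  set C := connectedComponentIn U x
  have hxC : x ∈ closure C := subset_closure (mem_connectedComponentIn hx)
  obtain ⟨y, hyC, hmax⟩ := hbdd.isCompact_closure.exists_isMaxOn ⟨x, hxC⟩ hf.continuousOn
  have hyU : y ∈ U := by
    by_contra hyU
    exact (hfU y hyU).not_ge (hmax hxC)
  have hyC : y ∈ C := mem_connectedComponentIn_of_mem_closure hU hyC hyU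
  refine ⟨y, hyC, ?_⟩
  filter_upwards [hU.connectedComponentIn.mem_nhds hyC] with w hw
  exact hmax (subset_closure hw)

end Topology

section Linear

variable {ι σ : Type*} [Fintype σ]

lemma eq_zero_of_forall_dotProduct_eq_zero {a : ι → σ → ℝ}
    (hess : Submodule.span ℝ (range a) = ⊤) {v : σ → ℝ} (h : ∀ i, a i ⬝ᵥ v = 0) : v = 0 := by
  have hker : Submodule.span ℝ (range a) ≤ LinearMap.ker ((dotProductBilin ℝ ℝ).flip v) :=
    Submodule.span_le.2 <| by rintro _ ⟨i, rfl⟩; exact h i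
  exact dotProduct_self_eq_zero.1 (hker (hess ▸ Submodule.mem_top))

lemma eq_zero_of_sum_mul_sq_dotProduct_div_eq_zero [Fintype ι] {a : ι → σ → ℝ}
    (hess : Submodule.span ℝ (range a) = ⊤) {s w : ι → ℝ} (hs : ∀ i, 0 < s i)
    (hw : ∀ i, 0 < w i) {v : σ → ℝ} (h : ∑ i, s i * (a i ⬝ᵥ v) ^ 2 / w i = 0) : v = 0 := by
  have hterm := (Finset.sum_eq_zero_iff_of_nonneg fun i _ =>
    div_nonneg (mul_nonneg (hs i).le (sq_nonneg (a i ⬝ᵥ v))) (hw i).le).1 h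
  refine eq_zero_of_forall_dotProduct_eq_zero hess fun i => ?_
  simpa [(hs i).ne', (hw i).ne'] using hterm i (mem_univ i)

end Linear

section Arrangement

variable {ι σ : Type*} [Fintype σ] {a : ι → σ → ℝ} {b : ι → ℝ}

def arrangementComplement (a : ι → σ → ℝ) (b : ι → ℝ) : Set (σ → ℝ) :=
  (⋃ i, {y | a i ⬝ᵥ y + b i = 0})ᶜ

lemma mem_arrangementComplement {y : σ → ℝ} :
    y ∈ arrangementComplement a b ↔ ∀ i, a i ⬝ᵥ y + b i ≠ 0 := by
  simp [arrangementComplement]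

lemma continuous_dotProduct_add (v : σ → ℝ) (c : ℝ) : Continuous fun y => v ⬝ᵥ y + c := by
  simp only [dotProduct]
  fun_prop

lemma isOpen_arrangementComplement [Finite ι] : IsOpen (arrangementComplement a b) :=
  (isClosed_iUnion_of_finite fun i =>
    isClosed_eq (continuous_dotProduct_add (a i) (b i)) continuous_const).isOpen_compl

end Arrangement

section Likelihood

variable {ι σ : Type*} [Fintype ι] [Fintype σ]

def IsLikelihoodCritical {K : Type*} [Field K] (a : ι → σ → K) (b s : ι → K) (z : σ → K) :
    Prop :=
  ∀ k, ∑ i, s i * a i k / (a i ⬝ᵥ z + b i) = 0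

lemma IsLikelihoodCritical.sum_mul_dotProduct_div_eq_zero {K : Type*} [Field K]
    {a : ι → σ → K} {b s : ι → K} {z : σ → K} (h : IsLikelihoodCritical a b s z) (v : σ → K) :
    ∑ i, s i * (a i ⬝ᵥ v) / (a i ⬝ᵥ z + b i) = 0 := by
  calc ∑ i, s i * (a i ⬝ᵥ v) / (a i ⬝ᵥ z + b i)
      = ∑ k, v k * ∑ i, s i * a i k / (a i ⬝ᵥ z + b i) := by
        simp only [dotProduct, Finset.mul_sum, Finset.sum_div]
        rw [Finset.sum_comm]
        refine Finset.sum_congr rfl fun k _ => Finset.sum_congr rfl fun i _ => ?_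
        ring
    _ = 0 := by simp only [h _, mul_zero, Finset.sum_const_zero]

lemma im_eq_zero_of_isLikelihoodCritical {a : ι → σ → ℝ}
    (hess : Submodule.span ℝ (range a) = ⊤) {b s : ι → ℝ} (hs : ∀ i, 0 < s i) {z : σ → ℂ}
    (hz : ∀ i, (fun k => (a i k : ℂ)) ⬝ᵥ z + b i ≠ 0)
    (hcrit : IsLikelihoodCritical (fun i k => (a i k : ℂ)) (fun i => b i) (fun i => s i) z)
    (k : σ) : (z k).im = 0 := by
  set v : σ → ℝ := fun k => (z k).im
  set P : ι → ℂ := fun i => (fun k => (a i k : ℂ)) ⬝ᵥ z + b i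
  have hPim : ∀ i, (P i).im = a i ⬝ᵥ v := by
    intro i
    simp [P, v, dotProduct, Complex.im_sum]
  have hcast : ∀ i, (fun k => (a i k : ℂ)) ⬝ᵥ (fun k => (v k : ℂ)) = (a i ⬝ᵥ v : ℝ) := by
    intro i
    simp [dotProduct]
  have him : ∀ i, ((s i : ℂ) * (a i ⬝ᵥ v : ℝ) / P i).im
      = -(s i * (a i ⬝ᵥ v) ^ 2 / Complex.normSq (P i)) := by
    intro i
    rw [← Complex.ofReal_mul, Complex.div_im, Complex.ofReal_im, Complex.ofReal_re, hPim]
    ring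
  have hsum : ∑ i, s i * (a i ⬝ᵥ v) ^ 2 / Complex.normSq (P i) = 0 := by
    have := congrArg Complex.im (hcrit.sum_mul_dotProduct_div_eq_zero fun k => (v k : ℂ))
    simp only [hcast, Complex.im_sum, Complex.zero_im] at this
    rw [← neg_eq_zero, ← Finset.sum_neg_distrib, ← this]
    exact Finset.sum_congr rfl fun i _ => (him i).symm
  have hv := eq_zero_of_sum_mul_sq_dotProduct_div_eq_zero hess hs
    (fun i => Complex.normSq_pos.2 (hz i)) hsum
  exact congrFun hv k

end Likelihood

section RealLikelihood

variable {ι σ : Type*} [Fintype ι] [Fintype σ] {a : ι → σ → ℝ} {b s : ι → ℝ}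

lemma IsLikelihoodCritical.eq_of_mul_pos (hess : Submodule.span ℝ (range a) = ⊤)
    (hs : ∀ i, 0 < s i) {y₁ y₂ : σ → ℝ} (h₁ : IsLikelihoodCritical a b s y₁)
    (h₂ : IsLikelihoodCritical a b s y₂)
    (hsign : ∀ i, 0 < (a i ⬝ᵥ y₁ + b i) * (a i ⬝ᵥ y₂ + b i)) : y₁ = y₂ := by
  set v := y₂ - y₁
  have hv : ∀ i, a i ⬝ᵥ v = (a i ⬝ᵥ y₂ + b i) - (a i ⬝ᵥ y₁ + b i) := by
    intro i
    rw [dotProduct_sub]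
    ring
  have hsum : ∑ i, s i * (a i ⬝ᵥ v) ^ 2 / ((a i ⬝ᵥ y₁ + b i) * (a i ⬝ᵥ y₂ + b i)) = 0 := by
    calc ∑ i, s i * (a i ⬝ᵥ v) ^ 2 / ((a i ⬝ᵥ y₁ + b i) * (a i ⬝ᵥ y₂ + b i))
        = ∑ i, (s i * (a i ⬝ᵥ v) / (a i ⬝ᵥ y₁ + b i) - s i * (a i ⬝ᵥ v) / (a i ⬝ᵥ y₂ + b i)) := by
          refine Finset.sum_congr rfl fun i _ => ?_
          have hp₁ : a i ⬝ᵥ y₁ + b i ≠ 0 := left_ne_zero_of_mul (hsign i).ne'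
          have hp₂ : a i ⬝ᵥ y₂ + b i ≠ 0 := right_ne_zero_of_mul (hsign i).ne'
          rw [hv]
          field_simp
      _ = 0 := by
          rw [Finset.sum_sub_distrib, h₁.sum_mul_dotProduct_div_eq_zero,
            h₂.sum_mul_dotProduct_div_eq_zero, sub_zero]
  exact (sub_eq_zero.1 (eq_zero_of_sum_mul_sq_dotProduct_div_eq_zero hess hs hsign hsum)).symm

noncomputable def logLikelihood (a : ι → σ → ℝ) (b s : ι → ℝ) (y : σ → ℝ) : ℝ :=
  ∑ i, s i * Real.log (a i ⬝ᵥ y + b i)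

lemma hasFDerivAt_logLikelihood {y : σ → ℝ} (hy : ∀ i, a i ⬝ᵥ y + b i ≠ 0) :
    HasFDerivAt (logLikelihood a b s)
      (∑ i, (s i * (a i ⬝ᵥ y + b i)⁻¹) • (dotProductBilin ℝ ℝ (a i)).toContinuousLinearMap) y := by
  unfold logLikelihood
  refine HasFDerivAt.fun_sum fun i _ => ?_
  have := ((((dotProductBilin ℝ ℝ (a i)).toContinuousLinearMap.hasFDerivAt (x := y)).add_const
    (b i)).log (hy i)).const_mul (s i)
  simpa [smul_smul] using this

lemma isLikelihoodCritical_of_isLocalMax {y : σ → ℝ} (hy : ∀ i, a i ⬝ᵥ y + b i ≠ 0)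
    (h : IsLocalMax (logLikelihood a b s) y) : IsLikelihoodCritical a b s y := by
  classical
  intro k
  have := congrArg (· (Pi.single k 1)) (h.hasFDerivAt_eq_zero (hasFDerivAt_logLikelihood hy))
  simpa [div_eq_mul_inv, mul_assoc, mul_comm] using this

lemma exists_isLikelihoodCritical_mem_of_isBounded (hs : ∀ i, 0 < s i) {x : σ → ℝ}
    (hx : x ∈ arrangementComplement a b)
    (hbdd : Bornology.IsBounded (connectedComponentIn (arrangementComplement a b) x)) :
    ∃ y ∈ connectedComponentIn (arrangementComplement a b) x, IsLikelihoodCritical a b s y := by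
  set U := arrangementComplement a b
  set M : (σ → ℝ) → ℝ := fun w => ∏ i, |a i ⬝ᵥ w + b i| ^ s i
  have hM : Continuous M := continuous_finsetProd _ fun i _ =>
    (continuous_dotProduct_add (a i) (b i)).abs.rpow_const fun _ => Or.inr (hs i).le
  have hMpos : ∀ w ∈ U, 0 < M w := fun w hw => Finset.prod_pos fun i _ =>
    Real.rpow_pos_of_pos (abs_pos.2 (mem_arrangementComplement.1 hw i)) _
  have hMzero : ∀ w ∉ U, M w = 0 := by
    intro w hw
    obtain ⟨i, hi⟩ : ∃ i, a i ⬝ᵥ w + b i = 0 := by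
      simpa [U, mem_arrangementComplement] using hw
    exact Finset.prod_eq_zero (mem_univ i) (by simp [hi, (hs i).ne'])
  have hlog : ∀ w ∈ U, logLikelihood a b s w = Real.log (M w) := by
    intro w hw
    have hp := fun i => abs_pos.2 (mem_arrangementComplement.1 hw i)
    rw [Real.log_prod fun i _ => (Real.rpow_pos_of_pos (hp i) _).ne']
    exact Finset.sum_congr rfl fun i _ => by rw [Real.log_rpow (hp i), Real.log_abs]
  obtain ⟨y, hyC, hmax⟩ := exists_isLocalMax_mem_connectedComponentIn
    isOpen_arrangementComplement hx hbdd hM fun w hw => hMzero w hw ▸ hMpos x hx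
  have hyU : y ∈ U := connectedComponentIn_subset U x hyC
  refine ⟨y, hyC, isLikelihoodCritical_of_isLocalMax (mem_arrangementComplement.1 hyU) ?_⟩
  filter_upwards [hmax, isOpen_arrangementComplement.mem_nhds hyU] with w hw hwU
  rw [hlog w hwU, hlog y hyU]
  exact Real.log_le_log (hMpos w hwU) hw

end RealLikelihood

theorem stmt1_general (d n : ℕ) (a : Fin (n + 1) → Fin d → ℝ) (b : Fin (n + 1) → ℝ)
    (hess : Submodule.span ℝ (Set.range a) = ⊤)
    (s : Fin (n + 1) → ℝ) (hs : ∀ i, 0 < s i) :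
    (∀ z : Fin d → ℂ,
      (∀ i, (∑ k, (a i k : ℂ) * z k + (b i : ℂ)) ≠ 0) →
      (∀ k, ∑ i, (s i : ℂ) * (a i k : ℂ) / (∑ k', (a i k' : ℂ) * z k' + (b i : ℂ)) = 0) →
      ∀ k, (z k).im = 0) ∧
    (∀ x : Fin d → ℝ,
      x ∈ (⋃ i, {y : Fin d → ℝ | ∑ k, a i k * y k + b i = 0})ᶜ →
      Bornology.IsBounded
        (connectedComponentIn (⋃ i, {y : Fin d → ℝ | ∑ k, a i k * y k + b i = 0})ᶜ x) →
      ∃! y : Fin d → ℝ,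
        y ∈ connectedComponentIn (⋃ i, {w : Fin d → ℝ | ∑ k, a i k * w k + b i = 0})ᶜ x ∧
        ∀ k, ∑ i, s i * a i k / (∑ k', a i k' * y k' + b i) = 0) := by
  refine ⟨fun z hz hcrit => im_eq_zero_of_isLikelihoodCritical hess hs hz hcrit,
    fun x hx hbdd => ?_⟩
  obtain ⟨y, hyC, hy⟩ := exists_isLikelihoodCritical_mem_of_isBounded (a := a) (b := b) hs hx hbdd
  refine ⟨y, ⟨hyC, hy⟩, fun y' ⟨hy'C, hy'⟩ =>
    IsLikelihoodCritical.eq_of_mul_pos hess hs hy' hy fun i => ?_⟩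
  exact mul_pos_of_mem_connectedComponentIn (continuous_dotProduct_add (a i) (b i))
    (fun u hu => mem_arrangementComplement.1 hu i) hy'C hyC

/-- Varchenko's theorem for the likelihood equations of a linear model: all complex
critical points of `L = ∑ s_i log p_i` are real, and each bounded region of the
real hyperplane arrangement contains exactly one critical point. -/
theorem stmt1 (d n : ℕ) (a : Fin (n + 1) → Fin d → ℝ) (b : Fin (n + 1) → ℝ)
    (hplane : ∀ i, a i ≠ 0)
    (hdist : ∀ i j : Fin (n + 1), i ≠ j →
      {x : Fin d → ℝ | ∑ k, a i k * x k + b i = 0} ≠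
        {x : Fin d → ℝ | ∑ k, a j k * x k + b j = 0})
    (hess : Submodule.span ℝ (Set.range a) = ⊤)
    (s : Fin (n + 1) → ℝ) (hs : ∀ i, 0 < s i) :
    (∀ z : Fin d → ℂ,
      (∀ i, (∑ k, (a i k : ℂ) * z k + (b i : ℂ)) ≠ 0) →
      (∀ k, ∑ i, (s i : ℂ) * (a i k : ℂ) / (∑ k', (a i k' : ℂ) * z k' + (b i : ℂ)) = 0) →
      ∀ k, (z k).im = 0) ∧
    (∀ x : Fin d → ℝ,
      x ∈ (⋃ i, {y : Fin d → ℝ | ∑ k, a i k * y k + b i = 0})ᶜ →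
      Bornology.IsBounded
        (connectedComponentIn (⋃ i, {y : Fin d → ℝ | ∑ k, a i k * y k + b i = 0})ᶜ x) →
      ∃! y : Fin d → ℝ,
        y ∈ connectedComponentIn (⋃ i, {w : Fin d → ℝ | ∑ k, a i k * w k + b i = 0})ᶜ x ∧
        ∀ k, ∑ i, s i * a i k / (∑ k', a i k' * y k' + b i) = 0) :=
  stmt1_general d n a b hess s hs
end

section
/- Let q_1, …, q_e be nonzero polynomials in d real variables all of whose nonzero coefficients are positive, let v_1, …, v_e > 0 be real numbers, let u ∈ ℝ^d, and let P = v_1·New(q_1) + ⋯ + v_e·New(q_e) be the Minkowski sum of the dilated Newton polytopes. If u lies in the interior of P, then for every ε > 0 the function x ↦ (∏_{i=1}^d x_i^{ε u_i − 1}) · (∏_{j=1}^e q_j(x)^{−ε v_j}) is Lebesgue integrable on the open orthant ℝ^d_{>0}. -/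
open scoped BigOperators Pointwise

noncomputable section

/-- The Newton polytope of a polynomial `q` in `d` variables: the convex hull in
`ℝ^d` of the exponent vectors of the monomials of `q` with nonzero coefficient. -/
def newtonPolytope {d : ℕ} (q : MvPolynomial (Fin d) ℝ) : Set (Fin d → ℝ) :=
  convexHull ℝ ((fun (a : Fin d →₀ ℕ) (i : Fin d) => (a i : ℝ)) '' ↑q.support)

open MeasureTheory Set

/-- One dimensional dominating function. -/
def domFn (α : ℝ) : ℝ → ℝ := fun y =>
  if 1 < y then y ^ (-(α + 1)) else if 0 < y then y ^ (α - 1) else 0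

lemma domFn_integrable {α : ℝ} (hα : 0 < α) : Integrable (domFn α) := by
  rw [← integrableOn_univ]
  have hsplit : (univ : Set ℝ) = Iic 0 ∪ (Ioc 0 1 ∪ Ioi 1) := by
    ext y
    simp only [mem_univ, mem_union, mem_Iic, mem_Ioc, mem_Ioi, true_iff]
    rcases le_or_gt y 0 with h | h
    · exact Or.inl h
    · rcases le_or_gt y 1 with h1 | h1
      · exact Or.inr (Or.inl ⟨h, h1⟩)
      · exact Or.inr (Or.inr h1)
  rw [hsplit]
  refine IntegrableOn.union ?_ (IntegrableOn.union ?_ ?_)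
  · have : IntegrableOn (fun _ : ℝ => (0 : ℝ)) (Iic 0) volume := integrableOn_zero
    refine this.congr_fun (fun y hy => ?_) measurableSet_Iic
    simp only [mem_Iic] at hy
    simp [domFn, not_lt.2 (hy.trans zero_le_one), not_lt.2 hy]
  · have hbase : IntegrableOn (fun y : ℝ => y ^ (α - 1)) (Ioc 0 1) volume := by
      rw [integrableOn_Ioc_iff_integrableOn_Ioo]
      exact (intervalIntegral.integrableOn_Ioo_rpow_iff one_pos).2 (by linarith)
    refine hbase.congr_fun (fun y hy => ?_) measurableSet_Ioc
    simp only [mem_Ioc] at hy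
    simp [domFn, not_lt.2 hy.2, hy.1]
  · have hbase : IntegrableOn (fun y : ℝ => y ^ (-(α + 1))) (Ioi 1) volume :=
      integrableOn_Ioi_rpow_of_lt (by linarith) one_pos
    refine hbase.congr_fun (fun y hy => ?_) measurableSet_Ioi
    simp only [mem_Ioi] at hy
    simp [domFn, hy]

/-- If `u` lies in the interior of `P = v₁·New(q₁) + ⋯ + vₑ·New(qₑ)`, then for every
`ε > 0` the integrand `x^{εu-1} ∏ qⱼ(x)^{-εvⱼ}` is Lebesgue integrable on the
open positive orthant. -/
theorem stmt11 (d e : ℕ) (q : Fin e → MvPolynomial (Fin d) ℝ)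
    (hq : ∀ j, q j ≠ 0)
    (hqpos : ∀ j, ∀ a ∈ (q j).support, 0 < (q j).coeff a)
    (v : Fin e → ℝ) (hv : ∀ j, 0 < v j) (u : Fin d → ℝ)
    (hu : u ∈ interior (∑ j, v j • newtonPolytope (q j))) :
    ∀ ε : ℝ, 0 < ε →
      MeasureTheory.IntegrableOn
        (fun x : Fin d → ℝ =>
          (∏ i, x i ^ (ε * u i - 1)) *
            ∏ j, (MvPolynomial.eval x (q j)) ^ (-(ε * v j)))
        {x | ∀ i, 0 < x i} MeasureTheory.volume := by
  intro ε hε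
  set S : Set (Fin d → ℝ) := {x | ∀ i, 0 < x i} with hSdef
  have hSopen : IsOpen S := by
    have : S = Set.pi univ (fun _ : Fin d => Ioi (0 : ℝ)) := by
      ext x; simp [hSdef, Set.mem_pi]
    rw [this]
    exact isOpen_set_pi finite_univ (fun i _ => isOpen_Ioi)
  have hSmeas : MeasurableSet S := hSopen.measurableSet
  have hne : ∀ j, ((q j).support).Nonempty := fun j =>
    MvPolynomial.support_nonempty.2 (hq j)
  set c : Fin e → ℝ := fun j => ((q j).support).inf' (hne j) (fun a => (q j).coeff a)
    with hcdef
  have hcpos : ∀ j, 0 < c j := by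
    intro j
    rw [hcdef]
    exact (Finset.lt_inf'_iff (hne j)).2 (fun b hb => hqpos j b hb)
  rw [mem_interior_iff_mem_nhds, Metric.mem_nhds_iff] at hu
  obtain ⟨r, hr, hball⟩ := hu
  set α : ℝ := ε * r / 2 with hαdef
  have hαpos : 0 < α := by positivity
  set C : ℝ := Real.exp (-(ε * ∑ j, v j * Real.log (c j))) with hCdef
  -- lower bound on eval
  have heval_ge : ∀ x ∈ S, ∀ j, ∀ a ∈ (q j).support,
      c j * Real.exp (∑ i, (a i : ℝ) * Real.log (x i)) ≤ MvPolynomial.eval x (q j) := by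
    intro x hx j a ha
    have hxpos : ∀ i, 0 < x i := hx
    have hterm : Real.exp (∑ i, (a i : ℝ) * Real.log (x i)) = ∏ i, x i ^ (a i) := by
      rw [Real.exp_sum]
      refine Finset.prod_congr rfl (fun i _ => ?_)
      rw [mul_comm ((a i : ℝ)) (Real.log (x i)), ← Real.rpow_def_of_pos (hxpos i),
        Real.rpow_natCast]
    rw [hterm, MvPolynomial.eval_eq']
    have h1 : c j * ∏ i, x i ^ (a i) ≤ (q j).coeff a * ∏ i, x i ^ (a i) := by
      refine mul_le_mul_of_nonneg_right ?_ (Finset.prod_nonneg fun i _ => pow_nonneg (hxpos i).le _)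
      exact Finset.inf'_le _ ha
    refine h1.trans ?_
    refine Finset.single_le_sum (f := fun b => (q j).coeff b * ∏ i, x i ^ (b i))
      (fun b hb => ?_) ha
    exact (mul_pos (hqpos j b hb)
      (Finset.prod_pos fun i _ => pow_pos (hxpos i) _)).le
  have heval_pos : ∀ x ∈ S, ∀ j, 0 < MvPolynomial.eval x (q j) := by
    intro x hx j
    obtain ⟨a, ha⟩ := hne j
    exact lt_of_lt_of_le (mul_pos (hcpos j) (Real.exp_pos _)) (heval_ge x hx j a ha)
  -- the pointwise bound
  have hbound : ∀ x ∈ S,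
      ‖(∏ i, x i ^ (ε * u i - 1)) *
        ∏ j, (MvPolynomial.eval x (q j)) ^ (-(ε * v j))‖
        ≤ C * ∏ i, domFn α (x i) := by
    intro x hx
    have hxpos : ∀ i, 0 < x i := hx
    set t : Fin d → ℝ := fun i => Real.log (x i) with htdef
    set sg : Fin d → ℝ := fun i => if t i < 0 then -1 else 1 with hsgdef
    have hsgt : ∀ i, sg i * t i = |t i| := by
      intro i
      rcases lt_or_ge (t i) 0 with h | h
      · simp [hsgdef, h, abs_of_neg h]
      · simp [hsgdef, not_lt.2 h, abs_of_nonneg h]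
    have hymem : u + (r / 2) • sg ∈ Metric.ball u r := by
      rw [Metric.mem_ball, dist_eq_norm]
      have h1 : u + (r / 2) • sg - u = (r / 2) • sg := by abel
      rw [h1]
      have h2 : ‖(r / 2) • sg‖ ≤ r / 2 := by
        refine pi_norm_le_iff_of_nonneg (by linarith) |>.2 (fun i => ?_)
        have hsg1 : ‖sg i‖ ≤ 1 := by
          rcases lt_or_ge (t i) 0 with h | h
          · simp [hsgdef, h]
          · simp [hsgdef, not_lt.2 h]
        calc ‖((r / 2) • sg) i‖ = (r / 2) * ‖sg i‖ := by
              simp only [Pi.smul_apply, smul_eq_mul, Real.norm_eq_abs, abs_mul]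
              rw [abs_of_nonneg (by linarith : (0:ℝ) ≤ r / 2)]
          _ ≤ (r / 2) * 1 := mul_le_mul_of_nonneg_left hsg1 (by linarith)
          _ = r / 2 := mul_one _
      linarith
    have hyP : u + (r / 2) • sg ∈ ∑ j, v j • newtonPolytope (q j) := hball hymem
    rw [Set.mem_finset_sum] at hyP
    obtain ⟨g, hg, hgsum⟩ := hyP
    have hw : ∀ j, ∃ w, w ∈ newtonPolytope (q j) ∧ v j • w = g j := by
      intro j
      exact Set.mem_smul_set.1 (hg (Finset.mem_univ j))
    choose w hwmem hwsmul using hw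
    set M : Fin e → ℝ := fun j =>
      ((q j).support).sup' (hne j) (fun a => ∑ i, (a i : ℝ) * t i) with hMdef
    have hdot : ∀ j, ∑ i, w j i * t i ≤ M j := by
      intro j
      have hlin : IsLinearMap ℝ (fun z : Fin d → ℝ => ∑ i, z i * t i) := by
        constructor
        · intro z z'
          simp [add_mul, Finset.sum_add_distrib]
        · intro s z
          simp [smul_eq_mul, Finset.mul_sum, mul_assoc]
      have hconv : Convex ℝ {z : Fin d → ℝ | ∑ i, z i * t i ≤ M j} :=
        convex_halfSpace_le hlin _
      have hsub : (fun (a : Fin d →₀ ℕ) (i : Fin d) => (a i : ℝ)) '' ↑(q j).support ⊆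
          {z : Fin d → ℝ | ∑ i, z i * t i ≤ M j} := by
        rintro _ ⟨a, ha, rfl⟩
        exact Finset.le_sup' (f := fun b : Fin d →₀ ℕ => ∑ i, (b i : ℝ) * t i)
          (by exact_mod_cast ha)
      exact convexHull_min hsub hconv (hwmem j)
    -- per-j bound
    have hj : ∀ j, (MvPolynomial.eval x (q j)) ^ (-(ε * v j)) ≤
        Real.exp (-(ε * v j) * (Real.log (c j) + M j)) := by
      intro j
      obtain ⟨a, haS, haM⟩ := Finset.exists_mem_eq_sup' (hne j)
        (fun a => ∑ i, (a i : ℝ) * t i)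
      have h1 : c j * Real.exp (M j) ≤ MvPolynomial.eval x (q j) := by
        rw [hMdef]
        simpa [haM] using heval_ge x hx j a haS
      have hcexp : (0:ℝ) < c j * Real.exp (M j) := mul_pos (hcpos j) (Real.exp_pos _)
      have h2 : (MvPolynomial.eval x (q j)) ^ (-(ε * v j)) ≤
          (c j * Real.exp (M j)) ^ (-(ε * v j)) := by
        refine Real.rpow_le_rpow_of_nonpos hcexp h1 ?_
        have : 0 < ε * v j := mul_pos hε (hv j)
        linarith
      refine h2.trans_eq ?_
      rw [Real.rpow_def_of_pos hcexp, Real.log_mul (hcpos j).ne' (Real.exp_pos _).ne',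
        Real.log_exp, mul_comm]
    -- product over j
    have hprodj : ∏ j, (MvPolynomial.eval x (q j)) ^ (-(ε * v j)) ≤
        Real.exp (∑ j, -(ε * v j) * (Real.log (c j) + M j)) := by
      rw [Real.exp_sum]
      exact Finset.prod_le_prod
        (fun j _ => Real.rpow_nonneg (heval_pos x hx j).le _)
        (fun j _ => hj j)
    -- first factor exactly
    have hfac : ∏ i, x i ^ (ε * u i - 1) = Real.exp (∑ i, (ε * u i - 1) * t i) := by
      rw [Real.exp_sum]
      refine Finset.prod_congr rfl (fun i _ => ?_)
      rw [Real.rpow_def_of_pos (hxpos i)]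
      congr 1
      simp only [htdef]
      ring
    -- key inequality from interior condition
    have hkey : ∑ i, u i * t i + (r / 2) * ∑ i, |t i| ≤ ∑ j, v j * M j := by
      have e1 : ∑ i, (u + (r / 2) • sg) i * t i
          = ∑ i, u i * t i + (r / 2) * ∑ i, |t i| := by
        rw [Finset.mul_sum]
        rw [← Finset.sum_add_distrib]
        refine Finset.sum_congr rfl (fun i _ => ?_)
        rw [← hsgt i]
        simp [Pi.add_apply, Pi.smul_apply, smul_eq_mul, add_mul, mul_assoc]
      have e2 : ∑ i, (u + (r / 2) • sg) i * t i = ∑ j, v j * ∑ i, w j i * t i := by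
        rw [← hgsum]
        have : ∀ i, (∑ j, g j) i = ∑ j, v j * w j i := by
          intro i
          rw [Finset.sum_apply]
          refine Finset.sum_congr rfl (fun j _ => ?_)
          rw [← hwsmul j]
          simp [Pi.smul_apply, smul_eq_mul]
        calc ∑ i, (∑ j, g j) i * t i = ∑ i, (∑ j, v j * w j i) * t i := by
              refine Finset.sum_congr rfl (fun i _ => ?_); rw [this i]
          _ = ∑ i, ∑ j, v j * w j i * t i := by
              refine Finset.sum_congr rfl (fun i _ => ?_); rw [Finset.sum_mul]
          _ = ∑ j, ∑ i, v j * w j i * t i := Finset.sum_comm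
          _ = ∑ j, v j * ∑ i, w j i * t i := by
              refine Finset.sum_congr rfl (fun j _ => ?_)
              rw [Finset.mul_sum]
              refine Finset.sum_congr rfl (fun i _ => ?_); ring
      rw [← e1, e2]
      exact Finset.sum_le_sum (fun j _ =>
        mul_le_mul_of_nonneg_left (hdot j) (hv j).le)
    -- identify domFn values
    have hdomeq : ∀ i, domFn α (x i) = Real.exp (-(t i) - α * |t i|) := by
      intro i
      rcases le_or_gt (x i) 1 with h | h
      · have htle : t i ≤ 0 := Real.log_nonpos (hxpos i).le h
        simp only [domFn]
        rw [if_neg (not_lt.2 h), if_pos (hxpos i), Real.rpow_def_of_pos (hxpos i)]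
        congr 1
        rw [abs_of_nonpos htle]
        simp only [htdef]
        ring
      · have htpos : 0 < t i := Real.log_pos h
        simp only [domFn]
        rw [if_pos h, Real.rpow_def_of_pos (hxpos i)]
        congr 1
        rw [abs_of_pos htpos]
        simp only [htdef]
        ring
    -- nonnegativity of F x
    have hFnn : 0 ≤ (∏ i, x i ^ (ε * u i - 1)) *
        ∏ j, (MvPolynomial.eval x (q j)) ^ (-(ε * v j)) := by
      refine mul_nonneg (Finset.prod_nonneg fun i _ => Real.rpow_nonneg (hxpos i).le _)
        (Finset.prod_nonneg fun j _ => Real.rpow_nonneg (heval_pos x hx j).le _)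
    rw [Real.norm_eq_abs, abs_of_nonneg hFnn]
    -- assemble
    have hCeq : C * ∏ i, domFn α (x i) =
        Real.exp (-(ε * ∑ j, v j * Real.log (c j)) + ∑ i, (-(t i) - α * |t i|)) := by
      rw [Real.exp_add, hCdef, Real.exp_sum]
      congr 1
      exact Finset.prod_congr rfl (fun i _ => hdomeq i)
    calc (∏ i, x i ^ (ε * u i - 1)) * ∏ j, (MvPolynomial.eval x (q j)) ^ (-(ε * v j))
        ≤ Real.exp (∑ i, (ε * u i - 1) * t i) *
          Real.exp (∑ j, -(ε * v j) * (Real.log (c j) + M j)) := by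
          rw [hfac]
          exact mul_le_mul_of_nonneg_left hprodj (Real.exp_nonneg _)
      _ = Real.exp ((∑ i, (ε * u i - 1) * t i) +
            ∑ j, -(ε * v j) * (Real.log (c j) + M j)) := (Real.exp_add _ _).symm
      _ ≤ Real.exp (-(ε * ∑ j, v j * Real.log (c j)) + ∑ i, (-(t i) - α * |t i|)) := by
          refine Real.exp_le_exp.2 ?_
          have eA : ∑ i, (ε * u i - 1) * t i
              = ε * ∑ i, u i * t i - ∑ i, t i := by
            rw [Finset.mul_sum, ← Finset.sum_sub_distrib]
            exact Finset.sum_congr rfl (fun i _ => by ring)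
          have eB : ∑ j, -(ε * v j) * (Real.log (c j) + M j)
              = -(ε * ∑ j, v j * Real.log (c j)) - ε * ∑ j, v j * M j := by
            rw [Finset.mul_sum, Finset.mul_sum, ← Finset.sum_neg_distrib,
              ← Finset.sum_sub_distrib]
            exact Finset.sum_congr rfl (fun j _ => by ring)
          have eC : ∑ i, (-(t i) - α * |t i|)
              = -(∑ i, t i) - α * ∑ i, |t i| := by
            rw [Finset.mul_sum, ← Finset.sum_neg_distrib, ← Finset.sum_sub_distrib]
          rw [eA, eB, eC]
          have hmul := mul_le_mul_of_nonneg_left hkey hε.le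
          rw [hαdef]
          nlinarith [hmul]
      _ = C * ∏ i, domFn α (x i) := hCeq.symm
  -- dominating function integrable
  have hdom : Integrable (fun x : Fin d → ℝ => C * ∏ i, domFn α (x i)) volume :=
    (Integrable.fintype_prod (fun _ : Fin d => domFn_integrable hαpos)).const_mul C
  refine Integrable.mono' hdom.integrableOn ?_ ?_
  · refine ContinuousOn.aestronglyMeasurable ?_ hSmeas
    refine ContinuousOn.mul ?_ ?_
    · refine continuousOn_finset_prod _ (fun i _ => ?_)
      exact (continuous_apply i).continuousOn.rpow_const
        (fun x hx => Or.inl (hx i).ne')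
    · refine continuousOn_finset_prod _ (fun j _ => ?_)
      exact (MvPolynomial.continuous_eval (q j)).continuousOn.rpow_const
        (fun x hx => Or.inl (heval_pos x hx j).ne')
  · exact (ae_restrict_iff' hSmeas).2 (Filter.Eventually.of_forall hbound)

end
end

section
/- Let s_0, s_1, s_2 be positive real numbers, N = s_0 + s_1 + s_2, let P = N·conv{(0,0), (1,0), (0,1)} ⊂ ℝ² and u = (s_1, s_2). Then 2·vol((P − u)°) = 1/(s_0 s_1) + 1/(s_0 s_2) + 1/(s_1 s_2), where vol is the 2-dimensional Lebesgue measure and (P − u)° = {y ∈ ℝ² : ⟨y, z⟩ ≤ 1 for all z ∈ P − u} is the polar dual of the translated triangle P − u. -/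
/-!
The vertices `wᵢ` of `P - u` satisfy `s₀ w₀ + s₁ w₁ + s₂ w₂ = 0`: the origin is interior to
`P - u`, with barycentric coordinates `sᵢ / N`. The polar dual of a triangle is cut out by the
three inequalities `⟨y, wᵢ⟩ ≤ 1`, and the affine functions `(sᵢ / N) (1 - ⟨y, wᵢ⟩)` are
nonnegative exactly there and sum to `1`. Two of them are therefore affine coordinates carrying
`(P - u)°` onto the standard triangle, so the area of `(P - u)°` is `1/2` divided by the
Jacobian `s₀ s₁ s₂ / N` of these coordinates.
-/

open scoped Pointwise Matrix

noncomputable section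

open MeasureTheory Set

def polarDual2 (S : Set (Fin 2 → ℝ)) : Set (Fin 2 → ℝ) :=
  {y | ∀ z ∈ S, y 0 * z 0 + y 1 * z 1 ≤ 1}

lemma image_sub_smul_convexHull {E : Type*} [AddCommGroup E] [Module ℝ E]
    (N : ℝ) (u : E) (s : Set E) :
    (fun z => z - u) '' (N • convexHull ℝ s) = convexHull ℝ ((fun z => N • z - u) '' s) := by
  have htr : ∀ t : Set E, (fun z => z - u) '' t = -u +ᵥ t := fun t => by
    simp only [sub_eq_neg_add]; rfl
  rw [← convexHull_smul, ← image_smul, htr, ← convexHull_vadd, ← htr, image_image]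

lemma polarDual2_convexHull (s : Set (Fin 2 → ℝ)) :
    polarDual2 (convexHull ℝ s) = polarDual2 s := by
  ext y
  refine ⟨fun h z hz => h z (subset_convexHull ℝ s hz), fun h => ?_⟩
  have hlin : IsLinearMap ℝ fun z : Fin 2 → ℝ => y 0 * z 0 + y 1 * z 1 :=
    ⟨fun z z' => by simp only [Pi.add_apply]; ring,
      fun c z => by simp only [Pi.smul_apply, smul_eq_mul]; ring⟩
  exact convexHull_min h (convex_halfSpace_le hlin 1)

def stdTriangle : Set (Fin 2 → ℝ) := {x | 0 ≤ x 0 ∧ 0 ≤ x 1 ∧ x 0 + x 1 ≤ 1}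

lemma volume_triangle_prod :
    volume {p : ℝ × ℝ | 0 ≤ p.1 ∧ 0 ≤ p.2 ∧ p.1 + p.2 ≤ 1} = ENNReal.ofReal (1 / 2) := by
  set T := {p : ℝ × ℝ | 0 ≤ p.1 ∧ 0 ≤ p.2 ∧ p.1 + p.2 ≤ 1}
  have hT : MeasurableSet T :=
    (measurableSet_le measurable_const measurable_fst).inter
      ((measurableSet_le measurable_const measurable_snd).inter
        (measurableSet_le (measurable_fst.add measurable_snd) measurable_const))
  have hslice : ∀ x : ℝ, volume (Prod.mk x ⁻¹' T) =
      (Icc 0 1).indicator (fun x => ENNReal.ofReal (1 - x)) x := by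
    intro x
    by_cases hx : x ∈ Icc (0 : ℝ) 1
    · have : Prod.mk x ⁻¹' T = Icc 0 (1 - x) := by
        ext y
        simp only [T, mem_preimage, mem_ofPred_eq, mem_Icc, hx.1, true_and, le_sub_iff_add_le']
      rw [indicator_of_mem hx, this, Real.volume_Icc, sub_zero]
    · have : Prod.mk x ⁻¹' T = ∅ := by
        ext y
        simp only [T, mem_preimage, mem_ofPred_eq, mem_empty_iff_false, iff_false, mem_Icc]
          at hx ⊢
        intro ⟨h₁, h₂, h₃⟩
        exact hx ⟨h₁, by linarith⟩
      rw [indicator_of_notMem hx, this, measure_empty]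
  have hint : ∫ x in Icc (0 : ℝ) 1, (1 - x) = 1 / 2 := by
    rw [integral_Icc_eq_integral_Ioc, ← intervalIntegral.integral_of_le zero_le_one,
      intervalIntegral.integral_comp_sub_left (fun x => x)]
    norm_num [integral_id]
  rw [Measure.volume_eq_prod, Measure.prod_apply hT, funext hslice,
    lintegral_indicator measurableSet_Icc, ← hint, ofReal_integral_eq_lintegral_ofReal]
  · exact (continuous_const.sub continuous_id).integrableOn_Icc
  · filter_upwards [self_mem_ae_restrict measurableSet_Icc] with x hx
    exact sub_nonneg.2 hx.2

lemma volume_stdTriangle : volume stdTriangle = ENNReal.ofReal (1 / 2) := by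
  rw [← volume_triangle_prod, ← (volume_preserving_finTwoArrow ℝ).measure_preimage_equiv]
  rfl

section Triangle

variable {k₀ k₁ k₂ : ℝ} {w₀ w₁ w₂ : Fin 2 → ℝ}

lemma polarDual2_triple_eq_preimage (hk₀ : 0 < k₀) (hk₁ : 0 < k₁) (hk₂ : 0 < k₂)
    (hk : k₀ + k₁ + k₂ = 1) (hw : k₀ • w₀ + k₁ • w₁ + k₂ • w₂ = 0) :
    polarDual2 {w₀, w₁, w₂} =
      Matrix.toLin' (-(Matrix.diagonal ![k₁, k₂] * Matrix.of ![w₁, w₂])) ⁻¹'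
        ((· + ![k₁, k₂]) ⁻¹' stdTriangle) := by
  ext y
  set L := -(Matrix.diagonal ![k₁, k₂] * Matrix.of ![w₁, w₂])
  set ℓ : (Fin 2 → ℝ) → ℝ := fun w => y 0 * w 0 + y 1 * w 1
  have hbal : k₀ * ℓ w₀ + k₁ * ℓ w₁ + k₂ * ℓ w₂ = 0 := by
    have h0 := congrFun hw 0
    have h1 := congrFun hw 1
    simp only [Pi.add_apply, Pi.smul_apply, smul_eq_mul, Pi.zero_apply] at h0 h1
    linear_combination y 0 * h0 + y 1 * h1
  have hx : (L *ᵥ y + ![k₁, k₂]) 0 = k₁ * (1 - ℓ w₁) ∧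
      (L *ᵥ y + ![k₁, k₂]) 1 = k₂ * (1 - ℓ w₂) := by
    simp only [L, ℓ, Matrix.mulVec_fin_two, Matrix.neg_apply, Matrix.diagonal_mul,
      Matrix.of_apply, Matrix.cons_val_zero, Matrix.cons_val_one, Matrix.cons_val',
      Matrix.cons_val_fin_one, Pi.add_apply]
    constructor <;> ring
  have hsum : k₁ * (1 - ℓ w₁) + k₂ * (1 - ℓ w₂) = 1 - k₀ * (1 - ℓ w₀) := by
    linear_combination hk - hbal
  have hiff : ∀ {k t : ℝ}, 0 < k → (0 ≤ k * (1 - t) ↔ t ≤ 1) := fun hk => by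
    rw [mul_nonneg_iff_of_pos_left hk, sub_nonneg]
  simp only [polarDual2, mem_insert_iff, mem_singleton_iff, forall_eq_or_imp, forall_eq,
    stdTriangle, mem_preimage, Matrix.toLin'_apply, mem_ofPred_eq, hx.1, hx.2, hsum,
    sub_le_self_iff, hiff hk₀, hiff hk₁, hiff hk₂]
  tauto

theorem volume_polarDual2_triple (hk₀ : 0 < k₀) (hk₁ : 0 < k₁) (hk₂ : 0 < k₂)
    (hk : k₀ + k₁ + k₂ = 1) (hw : k₀ • w₀ + k₁ • w₁ + k₂ • w₂ = 0)
    (hdet : (Matrix.of ![w₁, w₂]).det ≠ 0) :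
    volume (polarDual2 {w₀, w₁, w₂}) =
      ENNReal.ofReal (1 / (2 * k₁ * k₂ * |(Matrix.of ![w₁, w₂]).det|)) := by
  have hdetL : (-(Matrix.diagonal ![k₁, k₂] * Matrix.of ![w₁, w₂])).det =
      k₁ * k₂ * (Matrix.of ![w₁, w₂]).det := by
    simp [Matrix.det_neg, Matrix.det_mul, Matrix.det_diagonal, Fin.prod_univ_two]
  have hdetL0 : LinearMap.det
      (Matrix.toLin' (-(Matrix.diagonal ![k₁, k₂] * Matrix.of ![w₁, w₂]))) ≠ 0 := by
    rw [LinearMap.det_toLin', hdetL]; positivity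
  rw [polarDual2_triple_eq_preimage hk₀ hk₁ hk₂ hk hw,
    Measure.addHaar_preimage_linearMap _ hdetL0, measure_preimage_add_right, volume_stdTriangle,
    ← ENNReal.ofReal_mul (abs_nonneg _),
    LinearMap.det_toLin', hdetL, abs_inv, abs_mul, abs_mul, abs_of_pos hk₁, abs_of_pos hk₂]
  congr 1
  field_simp

end Triangle

/-- For `P = (s₀+s₁+s₂)·conv{(0,0),(1,0),(0,1)}` and `u = (s₁,s₂)`, the normalized
area of the polar dual `(P-u)°` equals `1/(s₀s₁) + 1/(s₀s₂) + 1/(s₁s₂)`. -/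
theorem stmt16 (s0 s1 s2 : ℝ) (h0 : 0 < s0) (h1 : 0 < s1) (h2 : 0 < s2) :
    2 * (MeasureTheory.volume
      (polarDual2 ((fun z => z - ![s1, s2]) ''
        ((s0 + s1 + s2) •
          (convexHull ℝ {![0, 0], ![1, 0], ![0, 1]} : Set (Fin 2 → ℝ)))))).toReal =
    1 / (s0 * s1) + 1 / (s0 * s2) + 1 / (s1 * s2) := by
  have hvertex : ∀ a b : ℝ, (s0 + s1 + s2) • ![a, b] - ![s1, s2] =
      ![(s0 + s1 + s2) * a - s1, (s0 + s1 + s2) * b - s2] := by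
    intro a b; ext i; fin_cases i <;> simp
  have hvertices : (fun z => (s0 + s1 + s2) • z - ![s1, s2]) '' {![0, 0], ![1, 0], ![0, 1]} =
      ({![-s1, -s2], ![s0 + s2, -s2], ![-s1, s0 + s1]} : Set (Fin 2 → ℝ)) := by
    simp only [image_insert_eq, image_singleton, hvertex]
    ring_nf
  have hN : 0 < s0 + s1 + s2 := by positivity
  have hbal : (s0 / (s0 + s1 + s2)) • ![-s1, -s2] + (s1 / (s0 + s1 + s2)) • ![s0 + s2, -s2] +
      (s2 / (s0 + s1 + s2)) • ![-s1, s0 + s1] = 0 := by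
    ext i; fin_cases i <;> simp <;> field_simp <;> ring
  have hdet : (Matrix.of ![![s0 + s2, -s2], ![-s1, s0 + s1]]).det = s0 * (s0 + s1 + s2) := by
    rw [Matrix.det_fin_two]
    simp only [Matrix.of_apply, Matrix.cons_val', Matrix.cons_val_zero, Matrix.cons_val_one,
      Matrix.cons_val_fin_one]
    ring
  rw [image_sub_smul_convexHull, polarDual2_convexHull, hvertices,
    volume_polarDual2_triple (by positivity) (by positivity) (by positivity) (by field_simp) hbal
      (by rw [hdet]; positivity),
    hdet, ENNReal.toReal_ofReal (by positivity), abs_of_pos (by positivity)]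
  field_simp
  ring

end
end

section
/- Let s_{00}, s_{01}, s_{10}, s_{11} be positive real numbers, N = s_{00} + s_{01} + s_{10} + s_{11}, let P = [0, N]² ⊂ ℝ² and u = (s_{10}+s_{11}, s_{01}+s_{11}). Then 2·vol((P − u)°) = N² / ( (s_{00}+s_{01})(s_{10}+s_{11})(s_{00}+s_{10})(s_{01}+s_{11}) ), where vol is the 2-dimensional Lebesgue measure and (P − u)° = {y ∈ ℝ² : ⟨y, z⟩ ≤ 1 for all z ∈ P − u} is the polar dual of the translated square P − u. -/
open scoped BigOperators Pointwise
open MeasureTheory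

noncomputable section

lemma slice_eq' (c d t : ℝ) (hc : 0 < c) (hd : 0 < d) :
    {y : ℝ | max (d*y) (-(c*y)) ≤ t} = Set.Icc (-(t/c)) (t/d) := by
  ext y
  simp only [Set.mem_setOf_eq, Set.mem_Icc, max_le_iff, neg_le, le_div_iff₀ hc,
    le_div_iff₀ hd]
  constructor <;> rintro ⟨h1, h2⟩ <;> constructor <;> nlinarith

lemma volK' (a b c d : ℝ) (ha : 0 < a) (hb : 0 < b) (hc : 0 < c) (hd : 0 < d) :
    MeasureTheory.volume
      {p : ℝ × ℝ | max (b*p.1) (-(a*p.1)) + max (d*p.2) (-(c*p.2)) ≤ 1}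
      = ENNReal.ofReal ((1/(2*a) + 1/(2*b)) * (1/c + 1/d)) := by
  have ha' : a ≠ 0 := ha.ne'
  have hb' : b ≠ 0 := hb.ne'
  have hc' : c ≠ 0 := hc.ne'
  have hd' : d ≠ 0 := hd.ne'
  set K : Set (ℝ × ℝ) :=
    {p : ℝ × ℝ | max (b*p.1) (-(a*p.1)) + max (d*p.2) (-(c*p.2)) ≤ 1} with hK
  have hcont : Continuous fun p : ℝ × ℝ =>
      max (b*p.1) (-(a*p.1)) + max (d*p.2) (-(c*p.2)) := by fun_prop
  have hKm : MeasurableSet K := (isClosed_le hcont continuous_const).measurableSet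
  set g : ℝ → ℝ := fun x => max (b*x) (-(a*x)) with hg
  set k : ℝ := 1/c + 1/d with hk
  have hk0 : 0 ≤ k := by positivity
  have hF : ∀ x : ℝ, volume (Prod.mk x ⁻¹' K) = ENNReal.ofReal ((1 - g x) * k) := by
    intro x
    have : Prod.mk x ⁻¹' K = {y : ℝ | max (d*y) (-(c*y)) ≤ 1 - g x} := by
      ext y
      simp only [hK, Set.mem_preimage, Set.mem_setOf_eq]
      constructor <;> intro h <;> simp only [hg] at * <;> linarith
    rw [this, slice_eq' c d _ hc hd, Real.volume_Icc]
    congr 1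
    rw [hk]
    field_simp
    ring
  have fub : volume K = ∫⁻ x : ℝ, ENNReal.ofReal ((1 - g x) * k) := by
    rw [Measure.volume_eq_prod, Measure.prod_apply hKm]
    simp_rw [hF]
  set l : ℝ := -(1/a) with hl
  set r : ℝ := 1/b with hr
  have hl0 : l ≤ 0 := by rw [hl]; simp; positivity
  have h0r : (0:ℝ) ≤ r := by rw [hr]; positivity
  have hlr : l ≤ r := hl0.trans h0r
  have hind : (fun x => ENNReal.ofReal ((1 - g x) * k)) =
      (Set.Icc l r).indicator (fun x => ENNReal.ofReal ((1 - g x) * k)) := by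
    funext x
    by_cases hx : x ∈ Set.Icc l r
    · rw [Set.indicator_of_mem hx]
    · rw [Set.indicator_of_notMem hx]
      rw [Set.mem_Icc, not_and_or, not_le, not_le] at hx
      have hg1 : 1 ≤ g x := by
        rcases hx with hx | hx
        · refine le_trans ?_ (le_max_right _ _)
          rw [hl] at hx
          have h' : 1/a < -x := by linarith
          have := (div_lt_iff₀ ha).1 h'
          linarith
        · refine le_trans ?_ (le_max_left _ _)
          rw [hr] at hx
          have := (div_lt_iff₀ hb).1 hx
          linarith
      rw [ENNReal.ofReal_eq_zero.2 (by nlinarith)]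
  have hfi : IntegrableOn (fun x => (1 - g x) * k) (Set.Icc l r) volume := by
    apply Continuous.integrableOn_Icc
    fun_prop
  have hnn : 0 ≤ᵐ[volume.restrict (Set.Icc l r)] fun x => (1 - g x) * k := by
    filter_upwards [ae_restrict_mem measurableSet_Icc] with x hx
    rw [Set.mem_Icc, hl, hr] at hx
    have h1 : g x ≤ 1 := by
      apply max_le
      · have := (le_div_iff₀ hb).1 hx.2
        linarith
      · have h' : -x ≤ 1/a := by linarith [hx.1]
        have := (le_div_iff₀ ha).1 h'
        linarith
    show (0:ℝ) ≤ (1 - g x) * k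
    exact mul_nonneg (by linarith) hk0
  have key : volume K = ENNReal.ofReal (∫ x in Set.Icc l r, (1 - g x) * k) := by
    rw [fub, hind, lintegral_indicator measurableSet_Icc,
      ← ofReal_integral_eq_lintegral_ofReal hfi hnn]
  rw [key]
  congr 1
  rw [integral_Icc_eq_integral_Ioc, ← intervalIntegral.integral_of_le hlr]
  have i1 : IntervalIntegrable (fun x => (1 - g x) * k) volume l 0 := by
    apply Continuous.intervalIntegrable; fun_prop
  have i2 : IntervalIntegrable (fun x => (1 - g x) * k) volume 0 r := by
    apply Continuous.intervalIntegrable; fun_prop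
  rw [← intervalIntegral.integral_add_adjacent_intervals i1 i2]
  have e1 : ∫ x in l..(0:ℝ), (1 - g x) * k = ∫ x in l..(0:ℝ), (k + (k*a)*x) := by
    apply intervalIntegral.integral_congr
    intro x hx
    rw [Set.uIcc_of_le hl0, Set.mem_Icc] at hx
    have h1 : b * x ≤ 0 := by nlinarith
    have h2 : (0:ℝ) ≤ -(a*x) := by nlinarith
    show (1 - g x) * k = k + (k*a)*x
    simp only [hg]
    rw [max_eq_right (by linarith : b*x ≤ -(a*x))]
    ring
  have e2 : ∫ x in (0:ℝ)..r, (1 - g x) * k = ∫ x in (0:ℝ)..r, (k + (-(k*b))*x) := by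
    apply intervalIntegral.integral_congr
    intro x hx
    rw [Set.uIcc_of_le h0r, Set.mem_Icc] at hx
    have h1 : (0:ℝ) ≤ b * x := by nlinarith
    have h2 : -(a*x) ≤ 0 := by nlinarith
    show (1 - g x) * k = k + (-(k*b))*x
    simp only [hg]
    rw [max_eq_left (by linarith : -(a*x) ≤ b*x)]
    ring
  rw [e1, e2]
  have ilin : ∀ (p q u v : ℝ), ∫ x in u..v, (p + q*x) = p*(v-u) + q*((v^2-u^2)/2) := by
    intro p q u v
    rw [intervalIntegral.integral_add (intervalIntegrable_const)
      ((intervalIntegral.intervalIntegrable_id).const_mul q),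
      intervalIntegral.integral_const, intervalIntegral.integral_const_mul,
      integral_id]
    simp [smul_eq_mul]; ring
  rw [ilin, ilin, hl, hr, hk]
  field_simp
  ring

/-- For `P = [0,N]²` with `N = s₀₀+s₀₁+s₁₀+s₁₁` and `u = (s₁₀+s₁₁, s₀₁+s₁₁)`, the
normalized area of the polar dual `(P-u)°` equals
`N²/((s₀₀+s₀₁)(s₁₀+s₁₁)(s₀₀+s₁₀)(s₀₁+s₁₁))`. -/
theorem stmt18 (s00 s01 s10 s11 : ℝ)
    (h00 : 0 < s00) (h01 : 0 < s01) (h10 : 0 < s10) (h11 : 0 < s11) :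
    2 * (MeasureTheory.volume
      (polarDual2 ((fun z => z - ![s10 + s11, s01 + s11]) ''
        Set.Icc (0 : Fin 2 → ℝ) (fun _ => s00 + s01 + s10 + s11)))).toReal =
    (s00 + s01 + s10 + s11) ^ 2 /
      ((s00 + s01) * (s10 + s11) * (s00 + s10) * (s01 + s11)) := by
  set a : ℝ := s10 + s11 with hadef
  set b : ℝ := s00 + s01 with hbdef
  set c : ℝ := s01 + s11 with hcdef
  set d : ℝ := s00 + s10 with hddef
  set N : ℝ := s00 + s01 + s10 + s11 with hNdef
  have ha : 0 < a := by positivity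
  have hb : 0 < b := by positivity
  have hc : 0 < c := by positivity
  have hd : 0 < d := by positivity
  have hab : N = a + b := by rw [hadef, hbdef, hNdef]; ring
  have hcd : N = c + d := by rw [hcdef, hddef, hNdef]; ring
  set K : Set (ℝ × ℝ) :=
    {p : ℝ × ℝ | max (b*p.1) (-(a*p.1)) + max (d*p.2) (-(c*p.2)) ≤ 1} with hK
  have hcont : Continuous fun p : ℝ × ℝ =>
      max (b*p.1) (-(a*p.1)) + max (d*p.2) (-(c*p.2)) := by fun_prop
  have hKm : MeasurableSet K := (isClosed_le hcont continuous_const).measurableSet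
  have hset : polarDual2 ((fun z => z - ![a, c]) ''
      Set.Icc (0 : Fin 2 → ℝ) (fun _ => N)) = ⇑MeasurableEquiv.finTwoArrow ⁻¹' K := by
    ext y
    have hft : (MeasurableEquiv.finTwoArrow y : ℝ × ℝ) = (y 0, y 1) := rfl
    simp only [polarDual2, Set.mem_setOf_eq, Set.mem_preimage, hft, hK]
    constructor
    · intro hy
      have key : ∀ w : Fin 2 → ℝ, w ∈ Set.Icc (0 : Fin 2 → ℝ) (fun _ => N) →
          y 0 * (w 0 - a) + y 1 * (w 1 - c) ≤ 1 := by
        intro w hw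
        have := hy (w - ![a, c]) ⟨w, hw, rfl⟩
        simpa [Pi.sub_apply] using this
      have c1 := key (fun _ => N) (by
        constructor <;> intro i <;> simp [hNdef] <;> positivity)
      have c2 := key ![N, 0] (by
        constructor <;> intro i <;> fin_cases i <;>
          simp [hNdef] <;> positivity)
      have c3 := key ![0, N] (by
        constructor <;> intro i <;> fin_cases i <;>
          simp [hNdef] <;> positivity)
      have c4 := key 0 (by
        constructor <;> intro i <;> simp [hNdef] <;> positivity)
      simp only [Matrix.cons_val_zero, Matrix.cons_val_one, Matrix.head_cons,
        Pi.zero_apply] at c1 c2 c3 c4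
      have e1 : N - a = b := by rw [hab]; ring
      have e2 : N - c = d := by rw [hcd]; ring
      rw [e2] at c1 c3
      rw [e1] at c1 c2
      rw [show (0:ℝ) - a = -a by ring] at c3 c4
      rw [show (0:ℝ) - c = -c by ring] at c2 c4
      rcases max_cases (b * y 0) (-(a * y 0)) with ⟨hm1, _⟩ | ⟨hm1, _⟩ <;>
        rcases max_cases (d * y 1) (-(c * y 1)) with ⟨hm2, _⟩ | ⟨hm2, _⟩ <;>
        rw [hm1, hm2] <;> linarith
    · rintro hy z ⟨w, hw, rfl⟩
      obtain ⟨hw0, hw1⟩ := hw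
      have h0 : ∀ i, (0:ℝ) ≤ w i := fun i => hw0 i
      have h1 : ∀ i, w i ≤ N := fun i => hw1 i
      simp only [Pi.sub_apply, Matrix.cons_val_zero, Matrix.cons_val_one, Matrix.head_cons]
      have t0 : y 0 * (w 0 - a) ≤ max (b * y 0) (-(a * y 0)) := by
        rcases le_total 0 (y 0) with h | h
        · refine le_trans ?_ (le_max_left _ _)
          have : w 0 - a ≤ b := by have := h1 0; rw [hab] at this; linarith
          nlinarith
        · refine le_trans ?_ (le_max_right _ _)
          have : -a ≤ w 0 - a := by have := h0 0; linarith
          nlinarith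
      have t1 : y 1 * (w 1 - c) ≤ max (d * y 1) (-(c * y 1)) := by
        rcases le_total 0 (y 1) with h | h
        · refine le_trans ?_ (le_max_left _ _)
          have : w 1 - c ≤ d := by have := h1 1; rw [hcd] at this; linarith
          nlinarith
        · refine le_trans ?_ (le_max_right _ _)
          have : -c ≤ w 1 - c := by have := h0 1; linarith
          nlinarith
      linarith
  rw [hset, (volume_preserving_finTwoArrow ℝ).measure_preimage hKm.nullMeasurableSet,
    volK' a b c d ha hb hc hd, ENNReal.toReal_ofReal (by positivity)]
  have hN2 : N ^ 2 = (a + b) * (c + d) := by rw [← hab, ← hcd]; ring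
  rw [hN2]
  field_simp
  ring

end
end
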